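/- arXiv:2506.22728 — 9 statements merged into one kernel-verified Lean document; each statement's English description precedes it below -/
import Mathlib

section
/- If a string s of length at least p+q has periods p and q, then gcd(p,q) is also a period of s. -/
/-- `p` is a period of the string `s` (1-based positions): `0 < p ≤ |s|` and
`s[t] = s[t+p]` for all `1 ≤ t ≤ |s| - p`. -/
def IsPeriod {α : Type*} (s : List α) (p : ℕ) : Prop :=
  0 < p ∧ p ≤ s.length ∧
    ∀ t, 1 ≤ t → t + p ≤ s.length → s[t - 1]? = s[t + p - 1]?

/-- 0-based periodicity predicate. -/
def Per {α : Type*} (s : List α) (r : ℕ) : Prop :=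
  ∀ i, i + r < s.length → s[i]? = s[i + r]?

lemma isPeriod_iff {α : Type*} (s : List α) (p : ℕ) :
    IsPeriod s p ↔ 0 < p ∧ p ≤ s.length ∧ Per s p := by
  unfold IsPeriod Per
  constructor
  · rintro ⟨h1, h2, h3⟩
    refine ⟨h1, h2, fun i hi => ?_⟩
    have := h3 (i + 1) (by omega) (by omega)
    rwa [show i + 1 - 1 = i from by omega,
      show i + 1 + p - 1 = i + p from by omega] at this
  · rintro ⟨h1, h2, h3⟩
    refine ⟨h1, h2, fun t ht htp => ?_⟩
    have := h3 (t - 1) (by omega)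
    rwa [show t - 1 + p = t + p - 1 from by omega] at this

lemma per_sub {α : Type*} (s : List α) (p q : ℕ) (hpq : p < q)
    (hlen : p + q ≤ s.length) (hp : Per s p) (hq : Per s q) : Per s (q - p) := by
  intro i hi
  rcases lt_or_ge i p with h | h
  · have h1 := hq i (by omega)
    have h2 := hp (i + q - p) (by omega)
    rw [show i + (q - p) = i + q - p from by omega, h2,
      show i + q - p + p = i + q from by omega]
    exact h1
  · have h1 := hp (i - p) (by omega)
    have h2 := hq (i - p) (by omega)
    rw [show i - p + p = i from by omega] at h1
    rw [show i + (q - p) = i - p + q from by omega, ← h2]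
    exact h1.symm

lemma per_gcd {α : Type*} (s : List α) : ∀ N p q, p + q ≤ N → 0 < p → 0 < q →
    p + q ≤ s.length → Per s p → Per s q → Per s (Nat.gcd p q) := by
  intro N
  induction N with
  | zero => intro p q h hp; omega
  | succ N ih =>
    intro p q hN hp0 hq0 hlen hp hq
    rcases lt_trichotomy p q with h | h | h
    · have hsub := per_sub s p q h hlen hp hq
      have := ih p (q - p) (by omega) hp0 (by omega) (by omega) hp hsub
      rwa [Nat.gcd_sub_self_right (le_of_lt h)] at this
    · subst h; rwa [Nat.gcd_self]
    · have hsub := per_sub s q p h (by omega) hq hp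
      have := ih (p - q) q (by omega) (by omega) hq0 (by omega) hsub hq
      rwa [Nat.gcd_sub_self_left (le_of_lt h)] at this

/-- Weak periodicity lemma (Fine and Wilf): if a string of length at least `p + q`
has periods `p` and `q`, then `gcd(p, q)` is also a period. -/
theorem weak_periodicity {α : Type*} (s : List α) (p q : ℕ)
    (hlen : p + q ≤ s.length) (hp : IsPeriod s p) (hq : IsPeriod s q) :
    IsPeriod s (Nat.gcd p q) := by
  rw [isPeriod_iff] at hp hq ⊢
  obtain ⟨hp0, hple, hpP⟩ := hp
  obtain ⟨hq0, hqle, hqP⟩ := hq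
  refine ⟨Nat.gcd_pos_of_pos_left _ hp0, le_trans (Nat.le_of_dvd hp0 (Nat.gcd_dvd_left p q)) hple, ?_⟩
  exact per_gcd s (p + q) p q le_rfl hp0 hq0 hlen hpP hqP
end

section
/- Let r = w[i..j] be a run of a string w with smallest period p, and let x be a substring with |x| ≥ p that has at least two occurrences fully contained in r. Then the distance between any two consecutive occurrences of x inside r is exactly p. -/
open scoped Classical

/-- `p` is a period of `w[i..j]` (1-based positions): `w[t] = w[t+p]`
whenever `i ≤ t` and `t + p ≤ j`. -/
def PeriodOn {α : Type*} (w : List α) (i j p : ℕ) : Prop :=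
  ∀ t ∈ Finset.Icc i j, t + p ≤ j → w[t - 1]? = w[t + p - 1]?

/-- `w[i..j]` is a run (maximal repetition) of `w` with smallest period `p`
(1-based positions): it is periodic with shortest period `p`, `2p ≤ j - i + 1`,
and the period extends neither to position `i-1` nor to `j+1`. -/
def IsRun {α : Type*} (w : List α) (i j p : ℕ) : Prop :=
  1 ≤ i ∧ i ≤ j ∧ j ≤ w.length ∧ 0 < p ∧ 2 * p ≤ j - i + 1 ∧
  PeriodOn w i j p ∧
  (∀ q ∈ Finset.Ico 1 p, ¬ PeriodOn w i j q) ∧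
  (i = 1 ∨ w[i - 2]? ≠ w[i + p - 2]?) ∧
  (j = w.length ∨ w[j]? ≠ w[j - p]?)

/-- `x` occurs in `w` at (1-based) position `s`. -/
def OccAt {α : Type*} (w x : List α) (s : ℕ) : Prop :=
  1 ≤ s ∧ s + x.length - 1 ≤ w.length ∧ (w.drop (s - 1)).take x.length = x

private lemma occ_get {α : Type*} {w x : List α} {s : ℕ} (h : OccAt w x s) {k : ℕ}
    (hk : k < x.length) : w[s - 1 + k]? = x[k]? := by
  obtain ⟨h1, h2, h3⟩ := h
  conv_rhs => rw [← h3]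
  rw [List.getElem?_take_of_lt hk, List.getElem?_drop]

private lemma period_steps {α : Type*} {w : List α} {i j p : ℕ}
    (hper : PeriodOn w i j p) (hp0 : 0 < p) :
    ∀ n a, i ≤ a → a + n * p ≤ j → w[a - 1]? = w[a + n * p - 1]? := by
  intro n
  induction n with
  | zero => intro a _ _; simp
  | succ n ih =>
    intro a ha hb
    have hnp : a + (n + 1) * p = (a + p) + n * p := by ring
    have hpj : a + p ≤ j := by
      have h0 : n * p + p = (n + 1) * p := by ring
      omega
    have h1 := hper a (Finset.mem_Icc.mpr ⟨ha, by omega⟩) hpj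
    rw [h1, hnp]
    exact ih (a + p) (by omega) (by omega)

private lemma period_congr {α : Type*} {w : List α} {i j p : ℕ}
    (hper : PeriodOn w i j p) (hp0 : 0 < p) {a b : ℕ} (ha : i ≤ a)
    (hb : b ≤ j) (hdvd : ∃ n, b = a + n * p) :
    w[a - 1]? = w[b - 1]? := by
  obtain ⟨n, rfl⟩ := hdvd
  exact period_steps hper hp0 n a ha hb

/-- Lemma: inside a run `w[i..j]` with smallest period `p`, any two consecutive
occurrences (fully contained in the run) of a substring `x` with `|x| ≥ p`
are at distance exactly `p`. -/
theorem run_consecutive_occurrences_dist {α : Type*} (w x : List α) (i j p : ℕ)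
    (hr : IsRun w i j p) (hx : p ≤ x.length) (s s' : ℕ)
    (hs : OccAt w x s ∧ i ≤ s ∧ s + x.length - 1 ≤ j)
    (hs' : OccAt w x s' ∧ i ≤ s' ∧ s' + x.length - 1 ≤ j)
    (hlt : s < s')
    (hcons : ∀ t, s < t → t < s' →
      ¬ (OccAt w x t ∧ i ≤ t ∧ t + x.length - 1 ≤ j)) :
    s' - s = p := by
  obtain ⟨hi1, hij, hjw, hp0, h2p, hper, hmin, -, -⟩ := hr
  obtain ⟨ho, hsi, hsj⟩ := hs
  obtain ⟨ho', hsi', hsj'⟩ := hs'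
  have hs1 : 1 ≤ s := ho.1
  have hs'1 : 1 ≤ s' := ho'.1
  set L := x.length with hL
  have hL1 : 1 ≤ L := le_trans hp0 hx
  by_cases hdp : p ≤ s' - s
  · -- there is an occurrence at `s + p`, so `s' ≤ s + p`
    have hocc : OccAt w x (s + p) ∧ i ≤ s + p ∧ s + p + L - 1 ≤ j := by
      refine ⟨⟨by omega, by omega, ?_⟩, by omega, by omega⟩
      apply List.ext_getElem?
      intro k
      by_cases hk : k < L
      · rw [List.getElem?_take_of_lt hk, List.getElem?_drop]
        have hper1 := hper (s + k) (Finset.mem_Icc.mpr ⟨by omega, by omega⟩) (by omega)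
        have e1 : s + k - 1 = s - 1 + k := by omega
        have e2 : s + k + p - 1 = s + p - 1 + k := by omega
        rw [e1, e2] at hper1
        rw [← hper1]
        exact occ_get ho hk
      · rw [List.getElem?_eq_none (le_trans (List.length_take_le _ _) (by omega)),
          List.getElem?_eq_none (by omega)]
    have h2 : ¬ (s + p < s') := fun h => hcons (s + p) (by omega) h hocc
    omega
  · -- otherwise `d := s' - s < p` would be a period of the whole run
    exfalso
    set d := s' - s with hd
    have hd1 : 1 ≤ d := by omega
    apply hmin d (Finset.mem_Ico.mpr ⟨hd1, by omega⟩)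
    intro t ht htd
    rw [Finset.mem_Icc] at ht
    set m := (t + p * s - s) / p with hm
    set k := (t + p * s - s) % p with hkdef
    have hk : k < p := Nat.mod_lt _ hp0
    have hdm : p * m + k = t + p * s - s := Nat.div_add_mod _ p
    have hps : s ≤ p * s := Nat.le_mul_of_pos_left s hp0
    have heq : t + p * s = (s + k) + p * m := by omega
    have hc1 : p * s = s * p := mul_comm p s
    have hc2 : p * m = m * p := mul_comm p m
    have hsub1 : (s - m) * p = s * p - m * p := Nat.sub_mul s m p
    have hsub2 : (m - s) * p = m * p - s * p := Nat.sub_mul m s p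
    have hkL : k < L := by omega
    -- the two ends of the chain
    have key1 : w[t - 1]? = w[s + k - 1]? ∧
        w[t + d - 1]? = w[s + k + d - 1]? := by
      rcases le_total m s with hms | hsm
      · have hmono : p * m ≤ p * s := Nat.mul_le_mul_left p hms
        constructor
        · exact period_congr hper hp0 ht.1 (by omega) ⟨s - m, by omega⟩
        · exact period_congr hper hp0 (by omega) (by omega) ⟨s - m, by omega⟩
      · have hmono : p * s ≤ p * m := Nat.mul_le_mul_left p hsm
        constructor
        · exact (period_congr hper hp0 (by omega) ht.2 ⟨m - s, by omega⟩).symm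
        · exact (period_congr hper hp0 (by omega) htd ⟨m - s, by omega⟩).symm
    -- the middle step, using the two occurrences of `x`
    have key3 : w[s + k - 1]? = w[s + k + d - 1]? := by
      have hx1 := occ_get ho hkL
      have hx2 := occ_get ho' hkL
      have e1 : s - 1 + k = s + k - 1 := by omega
      have e2 : s' - 1 + k = s + k + d - 1 := by omega
      rw [e1] at hx1
      rw [e2] at hx2
      rw [hx1, hx2]
    rw [key1.1, key3]
    exact key1.2.symm
end

section
/- For any string w of length n and position k, C(w,k) = k·(n-k+1) - Σ over runs ⟨i,j,p⟩ of w with i+p ≤ k ≤ j-p of (k-i-p+1)·(j-p+1-k). -/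
open scoped Classical

/-- The set of distinct (nonempty) substrings of `w` having an occurrence that
crosses position `k`: the substrings `w[i..j]` with `i ≤ k ≤ j`. -/
noncomputable def CSet {α : Type*} (w : List α) (k : ℕ) : Finset (List α) :=
  ((Finset.Icc 1 k) ×ˢ (Finset.Icc k w.length)).image
    (fun q : ℕ × ℕ => (w.drop (q.1 - 1)).take (q.2 - q.1 + 1))

namespace CAux
variable {α : Type*}

lemma periodOn_iff {w : List α} {i j p : ℕ} :
    PeriodOn w i j p ↔ ∀ t, i ≤ t → t + p ≤ j → w[t - 1]? = w[t + p - 1]? := by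
  constructor
  · intro h t ht htp
    exact h t (Finset.mem_Icc.2 ⟨ht, le_trans (Nat.le_add_right t p) htp⟩) htp
  · intro h t ht htp
    exact h t (Finset.mem_Icc.1 ht).1 htp

lemma periodOn_mono {w : List α} {i j p s e : ℕ} (h : PeriodOn w i j p)
    (hs : i ≤ s) (he : e ≤ j) : PeriodOn w s e p := by
  rw [periodOn_iff] at h ⊢
  intro t ht htp
  exact h t (le_trans hs ht) (le_trans htp he)

lemma periodOn_mul {w : List α} {i j p : ℕ} (h : PeriodOn w i j p) :
    ∀ m t, i ≤ t → t + p * m ≤ j → w[t - 1]? = w[t + p * m - 1]? := by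
  intro m
  induction m with
  | zero => simp
  | succ m ih =>
    intro t ht htm
    rw [Nat.mul_succ] at htm ⊢
    rw [periodOn_iff] at h
    rw [h t ht (by omega), ih (t + p) (by omega) (by omega)]
    congr 1
    omega

lemma periodOn_mod {w : List α} {i j p x y : ℕ} (h : PeriodOn w i j p) (hp : 0 < p)
    (hx : i ≤ x) (hxj : x ≤ j) (hy : i ≤ y) (hyj : y ≤ j) (hxy : x % p = y % p) :
    w[x - 1]? = w[y - 1]? := by
  have key : ∀ u v : ℕ, i ≤ u → v ≤ j → u ≤ v → u % p = v % p →
      w[u - 1]? = w[v - 1]? := by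
    intro u v hu hv huv hm
    obtain ⟨m, hm'⟩ := (Nat.modEq_iff_dvd' huv).1 hm
    rw [periodOn_mul h m u hu (by omega)]
    congr 1
    omega
  rcases le_total x y with hle | hle
  · exact key x y hx hyj hle hxy
  · exact (key y x hy hxj hle hxy.symm).symm

lemma gcd_sub {p q : ℕ} (h : q ≤ p) : Nat.gcd q (p - q) = Nat.gcd p q := by
  conv_lhs => rw [← Nat.gcd_add_self_right, Nat.sub_add_cancel h, Nat.gcd_comm]

lemma periodOn_sub {w : List α} {s e p q : ℕ} (hq : 0 < q) (hqp : q < p)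
    (hlen : s + p + q ≤ e + 1) (hP : PeriodOn w s e p) (hQ : PeriodOn w s e q) :
    PeriodOn w s e (p - q) := by
  rw [periodOn_iff] at hP hQ ⊢
  intro t ht htp
  by_cases hc : t + p ≤ e
  · rw [hP t ht hc, hQ (t + (p - q)) (by omega) (by omega)]
    congr 1
    omega
  · have hts : s + q ≤ t := by omega
    have h1 := hQ (t - q) (by omega) (by omega)
    have h2 := hP (t - q) (by omega) (by omega)
    rw [show t - 1 = t - q + q - 1 by omega, ← h1, h2]
    congr 1
    omega

lemma fine_wilf {w : List α} : ∀ N p q s e, p + q ≤ N → 0 < p → 0 < q →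
    s + p + q ≤ e + 1 → PeriodOn w s e p → PeriodOn w s e q →
    PeriodOn w s e (Nat.gcd p q) := by
  intro N
  induction N with
  | zero => intro p q s e h hp _ _ _ _; omega
  | succ N ih =>
    intro p q s e hN hp hq hlen hP hQ
    rcases Nat.lt_trichotomy p q with hlt | heq | hlt
    · have hstep := periodOn_sub hp hlt (by omega) hQ hP
      have := ih p (q - p) s e (by omega) hp (by omega) (by omega) hP hstep
      rwa [gcd_sub (le_of_lt hlt), Nat.gcd_comm] at this
    · subst heq
      rwa [Nat.gcd_self]
    · have hstep := periodOn_sub hq hlt (by omega) hP hQ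
      have := ih q (p - q) s e (by omega) hq (by omega) (by omega) hQ hstep
      rwa [gcd_sub (le_of_lt hlt)] at this

lemma exists_run {w : List α} : ∀ δ, 0 < δ → ∀ s e, 1 ≤ s → e ≤ w.length →
    s + 2 * δ ≤ e + 1 → PeriodOn w s e δ →
    ∃ i j p, IsRun w i j p ∧ i ≤ s ∧ e ≤ j ∧ 0 < p ∧ p ≤ δ := by
  intro δ
  induction δ using Nat.strong_induction_on with
  | _ δ ih =>
  intro hδ s e hs he hlen hper
  -- right extension
  set j0 := Nat.findGreatest (fun j => PeriodOn w s j δ) w.length with hj0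
  have hje : e ≤ j0 := Nat.le_findGreatest he hper
  have hjn : j0 ≤ w.length := Nat.findGreatest_le _
  have hperj : PeriodOn w s j0 δ := Nat.findGreatest_spec (P := fun j => PeriodOn w s j δ) he hper
  have hjmax : ∀ j', j0 < j' → j' ≤ w.length → ¬ PeriodOn w s j' δ :=
    fun j' hh1 hh2 => Nat.findGreatest_is_greatest (P := fun j => PeriodOn w s j δ) hh1 hh2
  -- left extension
  set d0 := Nat.findGreatest (fun d => PeriodOn w (s - d) j0 δ) (s - 1) with hd0
  have hd0s : d0 ≤ s - 1 := Nat.findGreatest_le _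
  have hperi : PeriodOn w (s - d0) j0 δ :=
    Nat.findGreatest_spec (P := fun d => PeriodOn w (s - d) j0 δ) (Nat.zero_le _) (by simpa using hperj)
  set i0 := s - d0 with hi0
  have hi01 : 1 ≤ i0 := by omega
  have hi0s : i0 ≤ s := by omega
  have himax : 1 < i0 → ¬ PeriodOn w (i0 - 1) j0 δ := by
    intro h hcon
    have := Nat.findGreatest_is_greatest (P := fun d => PeriodOn w (s - d) j0 δ)
      (k := d0 + 1) (n := s - 1) (by omega) (by omega)
    apply this
    show PeriodOn w (s - (d0 + 1)) j0 δ
    rw [show s - (d0 + 1) = i0 - 1 by omega]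
    exact hcon
  -- smallest period of [i0, j0]
  have hex : ∃ q, 0 < q ∧ PeriodOn w i0 j0 q := ⟨δ, hδ, hperi⟩
  set p := Nat.find hex with hp
  obtain ⟨hppos, hperp⟩ := Nat.find_spec hex
  have hpδ : p ≤ δ := Nat.find_le ⟨hδ, hperi⟩
  have hpmin : ∀ q, 0 < q → q < p → ¬ PeriodOn w i0 j0 q := by
    intro q hq1 hq2 hcon
    exact Nat.find_min hex hq2 ⟨hq1, hcon⟩
  rcases eq_or_lt_of_le hpδ with heq | hlt
  · -- p = δ, build run directly
    refine ⟨i0, j0, δ, ⟨hi01, by omega, hjn, hδ, by omega, hperi, ?_, ?_, ?_⟩,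
      hi0s, hje, hδ, le_refl δ⟩
    · intro q hq
      rw [Finset.mem_Ico] at hq
      exact hpmin q (by omega) (by omega)
    · by_cases hone : i0 = 1
      · exact Or.inl hone
      · right
        have hnper := himax (by omega)
        rw [periodOn_iff] at hnper
        push_neg at hnper
        obtain ⟨t, ht1, ht2, ht3⟩ := hnper
        have hti : t = i0 - 1 := by
          by_contra hcon
          rw [periodOn_iff] at hperi
          exact ht3 (hperi t (by omega) ht2)
        subst hti
        rw [show i0 - 1 - 1 = i0 - 2 by omega,
          show i0 - 1 + δ - 1 = i0 + δ - 2 by omega] at ht3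
        exact ht3
    · by_cases hone : j0 = w.length
      · exact Or.inl hone
      · right
        have hnper := hjmax (j0 + 1) (by omega) (by omega)
        rw [periodOn_iff] at hnper
        push_neg at hnper
        obtain ⟨t, ht1, ht2, ht3⟩ := hnper
        have hti : t = j0 + 1 - δ := by
          by_contra hcon
          rw [periodOn_iff] at hperi
          exact ht3 (hperi t (by omega) (by omega))
        subst hti
        intro hcon
        apply ht3
        rw [show j0 + 1 - δ - 1 = j0 - δ by omega, show j0 + 1 - δ + δ - 1 = j0 by omega]
        exact hcon.symm
  · obtain ⟨i, j, p', hrun, hi, hj, hp'pos, hp'le⟩ :=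
      ih p hlt hppos i0 j0 hi01 hjn (by omega) hperp
    exact ⟨i, j, p', hrun, le_trans hi hi0s, le_trans hje hj, hp'pos, le_trans hp'le hpδ⟩


lemma run_absorbs {w : List α} {i j p s e g : ℕ} (hrun : IsRun w i j p)
    (hwin : PeriodOn w s e g) (hg : 0 < g) (his : i ≤ s) (hej : e ≤ j)
    (hlen : s + p + g ≤ e + 1) : PeriodOn w i j g := by
  obtain ⟨hr1, hr2, hr3, hppos, hr5, hper, hmin, hl, hr⟩ := hrun
  rw [periodOn_iff]
  intro t ht htg
  have hps : s ≤ p * s := Nat.le_mul_of_pos_left s hppos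
  set u := s + (t + p * s - s) % p with hu
  have hup : u % p = t % p := by
    rw [hu, Nat.add_mod_mod, show s + (t + p * s - s) = t + p * s by omega,
      Nat.add_mul_mod_self_left]
  have hultp : (t + p * s - s) % p < p := Nat.mod_lt _ hppos
  have hub : s ≤ u ∧ u + g ≤ e := by constructor <;> omega
  have h1 : w[t - 1]? = w[u - 1]? :=
    periodOn_mod hper hppos ht (by omega) (by omega) (by omega) hup.symm
  have h2 : w[t + g - 1]? = w[u + g - 1]? := by
    refine periodOn_mod hper hppos (by omega) htg (by omega) (by omega) ?_
    rw [Nat.add_mod, Nat.add_mod u g, hup]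
  have h3 : w[u - 1]? = w[u + g - 1]? := by
    rw [periodOn_iff] at hwin
    exact hwin u hub.1 hub.2
  rw [h1, h3]
  exact h2.symm

lemma run_edge_left {w : List α} {i1 j1 i2 j2 p a b : ℕ}
    (hr1 : IsRun w i1 j1 p) (hr2 : IsRun w i2 j2 p)
    (ha2 : i2 + p ≤ a) (hab : a + p ≤ b)
    (hbj1 : b ≤ j1) : i2 ≤ i1 := by
  by_contra hcon
  push_neg at hcon
  obtain ⟨h21, _, _, hppos, _, _, _, h28, _⟩ := hr2
  have hper1 := hr1.2.2.2.2.2.1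
  rw [periodOn_iff] at hper1
  have h11 := hr1.1
  have heq := hper1 (i2 - 1) (by omega) (by omega)
  rcases h28 with h | h
  · omega
  · apply h
    rw [show i2 - 1 - 1 = i2 - 2 by omega, show i2 - 1 + p - 1 = i2 + p - 2 by omega] at heq
    exact heq

lemma run_edge_right {w : List α} {i1 j1 i2 j2 p a b : ℕ}
    (hr1 : IsRun w i1 j1 p) (hr2 : IsRun w i2 j2 p)
    (ha2 : i2 + p ≤ a) (hab : a + p ≤ b)
    (hbj1 : b ≤ j1) : j2 ≤ j1 := by
  by_contra hcon
  push_neg at hcon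
  obtain ⟨_, _, h13, hppos, _, _, _, _, h19⟩ := hr1
  have hper2 := hr2.2.2.2.2.2.1
  rw [periodOn_iff] at hper2
  have hj2len := hr2.2.2.1
  have heq := hper2 (j1 + 1 - p) (by omega) (by omega)
  rcases h19 with h | h
  · omega
  · apply h
    rw [show j1 + 1 - p - 1 = j1 - p by omega, show j1 + 1 - p + p - 1 = j1 by omega] at heq
    exact heq.symm

lemma run_eq {w : List α} {i1 j1 p1 i2 j2 p2 a b k : ℕ}
    (hr1 : IsRun w i1 j1 p1) (hr2 : IsRun w i2 j2 p2)
    (ha1 : i1 + p1 ≤ a) (hb1 : k + p1 ≤ b) (hbj1 : b ≤ j1)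
    (ha2 : i2 + p2 ≤ a) (hb2 : k + p2 ≤ b) (hbj2 : b ≤ j2)
    (hak : a ≤ k) :
    i1 = i2 ∧ j1 = j2 ∧ p1 = p2 := by
  have hp1pos := hr1.2.2.2.1
  have hp2pos := hr2.2.2.2.1
  have hpeq : p1 = p2 := by
    set m := min p1 p2 with hm
    set g := Nat.gcd p1 p2 with hg
    have hgpos : 0 < g := Nat.gcd_pos_of_pos_left _ hp1pos
    have hgm : g ≤ m := le_min (Nat.gcd_le_left _ hp1pos) (Nat.gcd_le_right _ hp2pos)
    have hwin1 : PeriodOn w (a - m) b p1 :=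
      periodOn_mono hr1.2.2.2.2.2.1 (by omega) hbj1
    have hwin2 : PeriodOn w (a - m) b p2 :=
      periodOn_mono hr2.2.2.2.2.2.1 (by omega) hbj2
    have hwinG : PeriodOn w (a - m) b g :=
      fine_wilf (p1 + p2) p1 p2 (a - m) b le_rfl hp1pos hp2pos (by omega) hwin1 hwin2
    have habs1 : PeriodOn w i1 j1 g :=
      run_absorbs hr1 hwinG hgpos (by omega) hbj1 (by omega)
    have habs2 : PeriodOn w i2 j2 g :=
      run_absorbs hr2 hwinG hgpos (by omega) hbj2 (by omega)
    have hge1 : p1 ≤ g := by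
      by_contra hcon
      exact hr1.2.2.2.2.2.2.1 g (Finset.mem_Ico.2 ⟨hgpos, by omega⟩) habs1
    have hge2 : p2 ≤ g := by
      by_contra hcon
      exact hr2.2.2.2.2.2.2.1 g (Finset.mem_Ico.2 ⟨hgpos, by omega⟩) habs2
    omega
  subst hpeq
  refine ⟨le_antisymm (run_edge_left hr2 hr1 ha1 (by omega) hbj2)
    (run_edge_left hr1 hr2 ha2 (by omega) hbj1),
    le_antisymm (run_edge_right hr2 hr1 ha1 (by omega) hbj2)
    (run_edge_right hr1 hr2 ha2 (by omega) hbj1), rfl⟩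

lemma take_drop_eq {w : List α} {s1 s2 L : ℕ}
    (h : ∀ m, m < L → w[s1 + m]? = w[s2 + m]?) :
    (w.drop s1).take L = (w.drop s2).take L := by
  apply List.ext_getElem?
  intro m
  by_cases hm : m < L
  · rw [List.getElem?_take_of_lt hm, List.getElem?_take_of_lt hm, List.getElem?_drop, List.getElem?_drop]
    exact h m hm
  · rw [List.getElem?_eq_none (le_trans (List.length_take_le _ _) (Nat.le_of_not_lt hm)),
      List.getElem?_eq_none (le_trans (List.length_take_le _ _) (Nat.le_of_not_lt hm))]

lemma eq_take_drop {w : List α} {s1 s2 L : ℕ}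
    (h : (w.drop s1).take L = (w.drop s2).take L) (m : ℕ) (hm : m < L) :
    w[s1 + m]? = w[s2 + m]? := by
  have := congrArg (fun l => l[m]?) h
  simpa [List.getElem?_take_of_lt hm, List.getElem?_drop] using this

lemma occ_shift {w : List α} {i j p a b : ℕ} (hper : PeriodOn w i j p)
    (hia : i + p ≤ a) (hi : 1 ≤ i) (hbj : b ≤ j) (hab : a ≤ b) :
    (w.drop (a - p - 1)).take (b - p - (a - p) + 1) = (w.drop (a - 1)).take (b - a + 1) := by
  rw [show b - p - (a - p) + 1 = b - a + 1 by omega]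
  apply take_drop_eq
  intro m hm
  rw [periodOn_iff] at hper
  have := hper (a - p + m) (by omega) (by omega)
  rw [show a - p + m - 1 = a - p - 1 + m by omega,
    show a - p + m + p - 1 = a - 1 + m by omega] at this
  exact this

lemma card_image_eq_filter {β : Type*} [DecidableEq β] (S : Finset (ℕ × ℕ)) (φ : ℕ × ℕ → β)
    (hinj : ∀ q ∈ S, ∀ q' ∈ S, φ q = φ q' → q.1 = q'.1 → q = q') :
    (S.image φ).card
      = (S.filter (fun q => ∀ q' ∈ S, φ q' = φ q → q.1 ≤ q'.1)).card := by
  classical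
  have himg : S.image φ
      = (S.filter (fun q => ∀ q' ∈ S, φ q' = φ q → q.1 ≤ q'.1)).image φ := by
    apply Finset.Subset.antisymm
    · intro x hx
      rw [Finset.mem_image] at hx
      obtain ⟨q, hq, hqx⟩ := hx
      obtain ⟨q0, hq0, hmin⟩ := Finset.exists_min_image
        (S.filter fun q' => φ q' = φ q) (fun q' => q'.1)
        ⟨q, Finset.mem_filter.2 ⟨hq, rfl⟩⟩
      rw [Finset.mem_filter] at hq0
      refine Finset.mem_image.2 ⟨q0, Finset.mem_filter.2 ⟨hq0.1, ?_⟩, by rw [hq0.2, hqx]⟩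
      intro q' hq' hpq'
      exact hmin q' (Finset.mem_filter.2 ⟨hq', by rw [hpq', hq0.2]⟩)
    · exact Finset.image_subset_image (Finset.filter_subset _ _)
  rw [himg, Finset.card_image_of_injOn]
  intro q hq q' hq' hpq
  simp only [Finset.coe_filter, Set.mem_setOf_eq] at hq hq'
  have ha := hq.2 q' hq'.1 hpq.symm
  have hb := hq'.2 q hq.1 hpq
  exact hinj q hq.1 q' hq'.1 hpq (le_antisymm ha hb)

end CAux

open CAux

set_option maxHeartbeats 1000000

/-- `C(w,k) = k(n-k+1) - Σ_{runs ⟨i,j,p⟩ with i+p ≤ k ≤ j-p} (k-i-p+1)(j-p+1-k)`. -/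
theorem C_eq_total_minus_dup {α : Type*} (w : List α) (n k : ℕ)
    (hn : w.length = n) (h1 : 1 ≤ k) (h2 : k ≤ n) :
    ((CSet w k).card : ℤ)
      = (k : ℤ) * ((n : ℤ) - k + 1)
        - ∑ t ∈ (((Finset.Icc 1 n) ×ˢ (Finset.Icc 1 n)) ×ˢ (Finset.Icc 1 n)).filter
              (fun t : (ℕ × ℕ) × ℕ =>
                IsRun w t.1.1 t.1.2 t.2 ∧ t.1.1 + t.2 ≤ k ∧ k + t.2 ≤ t.1.2),
            ((k : ℤ) - t.1.1 - t.2 + 1) * ((t.1.2 : ℤ) - t.2 + 1 - k) := by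
  subst hn
  set n := w.length with hn
  set φ : ℕ × ℕ → List α := fun q => (w.drop (q.1 - 1)).take (q.2 - q.1 + 1) with hφ
  set S : Finset (ℕ × ℕ) := (Finset.Icc 1 k) ×ˢ (Finset.Icc k n) with hS
  have hmemS : ∀ q : ℕ × ℕ, q ∈ S ↔ (1 ≤ q.1 ∧ q.1 ≤ k ∧ k ≤ q.2 ∧ q.2 ≤ n) := by
    intro q
    rw [hS, Finset.mem_product, Finset.mem_Icc, Finset.mem_Icc]
    tauto
  have hlenφ : ∀ q : ℕ × ℕ, q ∈ S → (φ q).length = q.2 - q.1 + 1 := by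
    intro q hq
    rw [hmemS] at hq
    simp only [hφ, List.length_take, List.length_drop]
    omega
  have hinj : ∀ q ∈ S, ∀ q' ∈ S, φ q = φ q' → q.1 = q'.1 → q = q' := by
    intro q hq q' hq' hphi hfst
    have l1 := hlenφ q hq
    have l2 := hlenφ q' hq'
    rw [hphi, l2] at l1
    rw [hmemS] at hq hq'
    exact Prod.ext hfst (by omega)
  set P : ℕ × ℕ → Prop := fun q => ∀ q' ∈ S, φ q' = φ q → q.1 ≤ q'.1 with hP
  have hC1 : (CSet w k).card = (S.filter P).card := by
    have hCim : CSet w k = S.image φ := by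
      unfold CSet
      rw [← hn, hS, hφ]
    rw [hCim]
    exact card_image_eq_filter S φ hinj
  set D := S.filter (fun q => ¬ P q) with hD
  have hcardsplit : (S.filter P).card + D.card = S.card :=
    Finset.card_filter_add_card_filter_not _
  have hcardS : S.card = k * (n + 1 - k) := by
    rw [hS, Finset.card_product, Nat.card_Icc, Nat.card_Icc]
    simp
  set Runs := (((Finset.Icc 1 n) ×ˢ (Finset.Icc 1 n)) ×ˢ (Finset.Icc 1 n)).filter
      (fun t : (ℕ × ℕ) × ℕ =>
        IsRun w t.1.1 t.1.2 t.2 ∧ t.1.1 + t.2 ≤ k ∧ k + t.2 ≤ t.1.2) with hRuns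
  set pairs : (ℕ × ℕ) × ℕ → Finset (ℕ × ℕ) :=
      fun t => (Finset.Icc (t.1.1 + t.2) k) ×ˢ (Finset.Icc (k + t.2) t.1.2) with hpairs
  have hsum : ∑ t ∈ Runs, ((k : ℤ) - t.1.1 - t.2 + 1) * ((t.1.2 : ℤ) - t.2 + 1 - k)
      = ((Runs.sigma pairs).card : ℤ) := by
    rw [Finset.card_sigma, Nat.cast_sum]
    apply Finset.sum_congr rfl
    intro t ht
    rw [hRuns, Finset.mem_filter] at ht
    obtain ⟨hmem, hrun, htk1, htk2⟩ := ht
    rw [hpairs]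
    rw [Finset.card_product, Nat.card_Icc, Nat.card_Icc, Nat.cast_mul]
    rw [show ((k + 1 - (t.1.1 + t.2) : ℕ) : ℤ) = (k : ℤ) - t.1.1 - t.2 + 1 by omega,
      show ((t.1.2 + 1 - (k + t.2) : ℕ) : ℤ) = (t.1.2 : ℤ) - t.2 + 1 - k by omega]
  have hbij : (Runs.sigma pairs).card = D.card := by
    apply Finset.card_nbij (fun x => x.2)
    · -- maps into D
      rintro ⟨⟨⟨i, j⟩, p⟩, a, b⟩ hx
      rw [Finset.mem_coe, Finset.mem_sigma] at hx
      obtain ⟨hxr, hxp⟩ := hx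
      simp only [hRuns, Finset.mem_filter] at hxr
      obtain ⟨-, hrun, hik, hkj⟩ := hxr
      simp only [hpairs, Finset.mem_product, Finset.mem_Icc] at hxp
      obtain ⟨⟨hpa1, hpa2⟩, hpb1, hpb2⟩ := hxp
      obtain ⟨hri, hrij, hrj, hrp, hr2p, hrper, -, -, -⟩ := hrun
      rw [hD, Finset.mem_coe, Finset.mem_filter]
      dsimp only
      constructor
      · rw [hmemS]
        refine ⟨by omega, hpa2, by omega, by omega⟩
      · intro hcon
        have hmem' : (a - p, b - p) ∈ S := by
          rw [hmemS]
          refine ⟨by omega, by omega, by omega, by omega⟩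
        have hφeq : φ (a - p, b - p) = φ (a, b) :=
          occ_shift hrper (by omega) hri hpb2 (by omega)
        have := hcon (a - p, b - p) hmem' hφeq
        simp only at this
        omega
    · -- injective
      rintro ⟨⟨⟨i1, j1⟩, p1⟩, a1, b1⟩ hx ⟨⟨⟨i2, j2⟩, p2⟩, a2, b2⟩ hy hxy
      simp only [Finset.coe_sigma, Set.mem_sigma_iff] at hx hy
      dsimp only at hxy
      rw [Prod.mk.injEq] at hxy
      obtain ⟨hab1, hab2⟩ := hxy
      subst hab1; subst hab2
      obtain ⟨hxr, hxp⟩ := hx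
      obtain ⟨hyr, hyp⟩ := hy
      simp only [Finset.mem_coe, hRuns, Finset.mem_filter] at hxr hyr
      obtain ⟨-, hrun1, -, -⟩ := hxr
      obtain ⟨-, hrun2, -, -⟩ := hyr
      simp only [Finset.mem_coe, hpairs, Finset.mem_product, Finset.mem_Icc] at hxp hyp
      obtain ⟨⟨h1a, h1b⟩, h1c, h1d⟩ := hxp
      obtain ⟨⟨h2a, h2b⟩, h2c, h2d⟩ := hyp
      obtain ⟨hie, hje, hpe⟩ := run_eq hrun1 hrun2 h1a h1c h1d h2a h2c h2d h1b
      subst hie; subst hje; subst hpe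
      rfl
    · -- surjective
      rintro ⟨a, b⟩ hq
      rw [Finset.mem_coe, hD, Finset.mem_filter] at hq
      obtain ⟨hqS, hqP⟩ := hq
      simp only [hP] at hqP
      push_neg at hqP
      obtain ⟨q', hq'S, hq'φ, hq'lt⟩ := hqP
      obtain ⟨a', b'⟩ := q'
      simp only at hq'lt
      rw [hmemS] at hqS hq'S
      obtain ⟨hA1, hA2, hA3, hA4⟩ := hqS
      obtain ⟨hB1, hB2, hB3, hB4⟩ := hq'S
      have hlen1 := hlenφ (a', b') (by rw [hmemS]; exact ⟨hB1, hB2, hB3, hB4⟩)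
      have hlen2 := hlenφ (a, b) (by rw [hmemS]; exact ⟨hA1, hA2, hA3, hA4⟩)
      rw [hq'φ, hlen2] at hlen1
      simp only at hlen1
      -- b' - a' = b - a ; δ := a - a'
      set δ := a - a' with hδ
      have hδpos : 0 < δ := by omega
      have hb' : b' = b - δ := by omega
      have hφeq' : (w.drop (a' - 1)).take (b - a + 1) = (w.drop (a - 1)).take (b - a + 1) := by
        have : φ (a', b') = φ (a, b) := hq'φ
        rw [hφ] at this
        simp only at this
        rw [show b' - a' + 1 = b - a + 1 by omega] at this
        exact this
      have hper : PeriodOn w a' b δ := by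
        rw [periodOn_iff]
        intro t ht htb
        have hm : t - a' < b - a + 1 := by omega
        have := eq_take_drop hφeq' (t - a') hm
        rw [show a' - 1 + (t - a') = t - 1 by omega,
          show a - 1 + (t - a') = t + δ - 1 by omega] at this
        exact this
      obtain ⟨i, j, p, hrun, hi, hj, hppos, hpδ⟩ :=
        exists_run δ hδpos a' b hB1 hA4 (by omega) hper
      have hrn := hrun
      obtain ⟨hri, hrij, hrj, hrp, hr2p, -, -, -, -⟩ := hrn
      refine ⟨⟨((i, j), p), (a, b)⟩, ?_, rfl⟩
      rw [Finset.mem_coe, Finset.mem_sigma]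
      dsimp only
      constructor
      · rw [hRuns, Finset.mem_filter]
        dsimp only
        refine ⟨?_, hrun, by omega, by omega⟩
        rw [Finset.mem_product, Finset.mem_product, Finset.mem_Icc, Finset.mem_Icc,
          Finset.mem_Icc]
        dsimp only
        refine ⟨⟨⟨hri, by omega⟩, by omega, hrj⟩, hrp, by omega⟩
      · rw [hpairs]
        dsimp only
        rw [Finset.mem_product, Finset.mem_Icc, Finset.mem_Icc]
        dsimp only
        exact ⟨⟨by omega, hA2⟩, by omega, by omega⟩
  have hcardSZ : (S.card : ℤ) = (k : ℤ) * ((n : ℤ) - k + 1) := by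
    rw [hcardS, Nat.cast_mul]
    congr 1
    omega
  rw [hsum, hbij]
  omega
end

section
/- For any string w of length n, the number of runs of w is strictly less than n. -/
open scoped Classical

namespace RunsAux



variable {α : Type*} {r : α → α → Prop}

/-- Characterization of lex: first difference at `k`. -/
def LexDiff (r : α → α → Prop) (a b : List α) (k : ℕ) : Prop :=
  (∀ m, m < k → a[m]? = b[m]?) ∧
  ((a[k]? = none ∧ b[k]? ≠ none) ∨
    ∃ x y, a[k]? = some x ∧ b[k]? = some y ∧ r x y)

lemma lex_iff {a b : List α} : List.Lex r a b ↔ ∃ k, LexDiff r a b k := by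
  constructor
  · intro h
    induction h with
    | @nil b l =>
        exact ⟨0, fun m hm => absurd hm (Nat.not_lt_zero m), Or.inl (by simp)⟩
    | @cons a l₁ l₂ h ih =>
        obtain ⟨k, hag, hk⟩ := ih
        refine ⟨k+1, ?_, ?_⟩
        · intro m hm
          cases m with
          | zero => simp
          | succ m => simpa using hag m (by omega)
        · simpa using hk
    | @rel x l₁ y l₂ h =>
        exact ⟨0, fun m hm => absurd hm (Nat.not_lt_zero m),
          Or.inr ⟨x, y, by simp, by simp, h⟩⟩
  · rintro ⟨k, hag, hk⟩
    induction k generalizing a b with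
    | zero =>
        cases a with
        | nil =>
            cases b with
            | nil =>
                rcases hk with ⟨_, h⟩ | ⟨x, y, hx, _, _⟩
                · exact absurd rfl h
                · simp at hx
            | cons y bt => exact List.Lex.nil
        | cons x at' =>
            rcases hk with ⟨hx, _⟩ | ⟨x', y', hx, hy, hr⟩
            · simp at hx
            · cases b with
              | nil => simp at hy
              | cons y bt =>
                  simp at hx hy
                  subst hx; subst hy
                  exact List.Lex.rel hr
    | succ k ih =>
        cases a with
        | nil =>
            cases b with
            | nil =>
                rcases hk with ⟨_, h⟩ | ⟨x, y, hx, _, _⟩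
                · exact absurd rfl h
                · simp at hx
            | cons y bt => exact List.Lex.nil
        | cons x at' =>
            cases b with
            | nil =>
                have := hag 0 (Nat.succ_pos k)
                simp at this
            | cons y bt =>
                have h0 := hag 0 (Nat.succ_pos k)
                simp at h0
                subst h0
                refine List.Lex.cons (ih ?_ ?_)
                · intro m hm
                  have := hag (m+1) (by omega)
                  simpa using this
                · simpa using hk

lemma lex_irrefl (hasym : ∀ x y, r x y → ¬ r y x) (a : List α) : ¬ List.Lex r a a := by
  intro h
  rw [lex_iff] at h
  obtain ⟨k, _, hk⟩ := h
  rcases hk with ⟨h1, h2⟩ | ⟨x, y, hx, hy, hr⟩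
  · exact h2 h1
  · rw [hx] at hy
    cases hy
    exact hasym x x hr hr

lemma lex_asymm (hasym : ∀ x y, r x y → ¬ r y x) {a b : List α}
    (h1 : List.Lex r a b) (h2 : List.Lex r b a) : False := by
  rw [lex_iff] at h1 h2
  obtain ⟨k1, ag1, d1⟩ := h1
  obtain ⟨k2, ag2, d2⟩ := h2
  rcases Nat.lt_trichotomy k1 k2 with h | h | h
  · have e := ag2 k1 h
    rcases d1 with ⟨hn, hne⟩ | ⟨x, y, hx, hy, hr⟩
    · exact hne (e.trans hn)
    · rw [hy] at e; rw [hx] at e; cases e; exact hasym _ _ hr hr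
  · subst h
    rcases d1 with ⟨hn, hne⟩ | ⟨x, y, hx, hy, hr⟩
    · rcases d2 with ⟨hn2, hne2⟩ | ⟨x2, y2, hx2, hy2, hr2⟩
      · exact hne2 hn
      · rw [hy2] at hn; cases hn
    · rcases d2 with ⟨hn2, hne2⟩ | ⟨x2, y2, hx2, hy2, hr2⟩
      · rw [hy] at hn2; cases hn2
      · rw [hx] at hy2; rw [hy] at hx2; cases hy2; cases hx2
        exact hasym _ _ hr hr2
  · have e := ag1 k2 h
    rcases d2 with ⟨hn, hne⟩ | ⟨x, y, hx, hy, hr⟩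
    · exact hne (e.trans hn)
    · rw [hy] at e; rw [hx] at e; cases e; exact hasym _ _ hr hr

lemma lex_trans (htr : ∀ x y z, r x y → r y z → r x z) {a b c : List α}
    (h1 : List.Lex r a b) (h2 : List.Lex r b c) : List.Lex r a c := by
  rw [lex_iff] at h1 h2 ⊢
  obtain ⟨k1, ag1, d1⟩ := h1
  obtain ⟨k2, ag2, d2⟩ := h2
  refine ⟨min k1 k2, fun m hm => (ag1 m (by omega)).trans (ag2 m (by omega)), ?_⟩
  rcases Nat.lt_trichotomy k1 k2 with h | h | h
  · rw [min_eq_left (le_of_lt h)]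
    have e := ag2 k1 h
    rcases d1 with ⟨hn, hne⟩ | ⟨x, y, hx, hy, hr⟩
    · exact Or.inl ⟨hn, fun hc => hne (e.trans hc)⟩
    · exact Or.inr ⟨x, y, hx, e ▸ hy, hr⟩
  · subst h
    rw [min_self]
    rcases d1 with ⟨hn, hne⟩ | ⟨x, y, hx, hy, hr⟩
    · rcases d2 with ⟨hn2, hne2⟩ | ⟨x2, y2, hx2, hy2, hr2⟩
      · exact absurd hn2 hne
      · exact Or.inl ⟨hn, by rw [hy2]; simp⟩
    · rcases d2 with ⟨hn2, hne2⟩ | ⟨x2, y2, hx2, hy2, hr2⟩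
      · rw [hy] at hn2; cases hn2
      · rw [hy] at hx2; cases hx2
        exact Or.inr ⟨x, y2, hx, hy2, htr _ _ _ hr hr2⟩
  · rw [min_eq_right (le_of_lt h)]
    have e := ag1 k2 h
    rcases d2 with ⟨hn, hne⟩ | ⟨x, y, hx, hy, hr⟩
    · exact Or.inl ⟨e.trans hn, hne⟩
    · exact Or.inr ⟨x, y, e.trans hx, hy, hr⟩

lemma lex_total (htri : ∀ x y : α, r x y ∨ x = y ∨ r y x) :
    ∀ (a b : List α), a ≠ b → List.Lex r a b ∨ List.Lex r b a := by
  intro a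
  induction a with
  | nil =>
      intro b hb
      cases b with
      | nil => exact absurd rfl hb
      | cons y bt => exact Or.inl List.Lex.nil
  | cons x at' ih =>
      intro b hb
      cases b with
      | nil => exact Or.inr List.Lex.nil
      | cons y bt =>
          rcases htri x y with h | h | h
          · exact Or.inl (List.Lex.rel h)
          · subst h
            have : at' ≠ bt := by intro h; exact hb (by rw [h])
            rcases ih bt this with h | h
            · exact Or.inl (List.Lex.cons h)
            · exact Or.inr (List.Lex.cons h)
          · exact Or.inr (List.Lex.rel h)

lemma lex_append_cancel (hasym : ∀ x y, r x y → ¬ r y x) :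
    ∀ (c a b : List α), List.Lex r (c ++ a) (c ++ b) → List.Lex r a b := by
  intro c
  induction c with
  | nil => intro a b h; simpa using h
  | cons x ct ih =>
      intro a b h
      simp only [List.cons_append] at h
      cases h with
      | cons h => exact ih a b h
      | rel h => exact absurd h (hasym x x · h)

lemma lex_append_right_of_length_eq (a b c d : List α) (hlen : a.length = b.length)
    (h : List.Lex r a b) : List.Lex r (a ++ c) (b ++ d) := by
  rw [lex_iff] at h ⊢
  obtain ⟨k, ag, dk⟩ := h
  rcases dk with ⟨hn, hne⟩ | ⟨x, y, hx, hy, hr⟩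
  · exfalso
    rw [List.getElem?_eq_none_iff] at hn
    apply hne
    rw [List.getElem?_eq_none_iff]
    omega
  · have hk : k < a.length := by
      by_contra hc
      rw [List.getElem?_eq_none_iff.2 (by omega)] at hx
      cases hx
    refine ⟨k, ?_, Or.inr ⟨x, y, ?_, ?_, hr⟩⟩
    · intro m hm
      rw [List.getElem?_append_left (by omega), List.getElem?_append_left (by omega)]
      exact ag m hm
    · rw [List.getElem?_append_left hk]; exact hx
    · rw [List.getElem?_append_left (by omega)]; exact hy


/-! ### Suffixes, factors, Lyndon words -/

/-- The suffix of `w` starting at 1-based position `l`. -/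
def Suf (w : List α) (l : ℕ) : List α := w.drop (l - 1)

/-- The factor of `w` of length `k` starting at 1-based position `l`. -/
def Fac (w : List α) (l k : ℕ) : List α := (w.drop (l - 1)).take k

/-- Lyndon word with respect to a strict order `r`. -/
def LynR (r : α → α → Prop) (u : List α) : Prop :=
  ∀ t, 0 < t → t < u.length → List.Lex r u (u.drop t)

lemma sget (w : List α) (l m : ℕ) : (Suf w l)[m]? = w[l - 1 + m]? := by
  simp [Suf, List.getElem?_drop]

lemma fget (w : List α) (l k m : ℕ) (h : m < k) :
    (Fac w l k)[m]? = w[l - 1 + m]? := by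
  rw [Fac, List.getElem?_take_of_lt h, List.getElem?_drop]

lemma fget_none (w : List α) (l k m : ℕ) (h : k ≤ m) : (Fac w l k)[m]? = none := by
  apply List.getElem?_eq_none_iff.2
  simp [Fac]
  omega

lemma flen (w : List α) (l k : ℕ) (h : l - 1 + k ≤ w.length) : (Fac w l k).length = k := by
  simp [Fac]
  omega

lemma suf_len (w : List α) (l : ℕ) : (Suf w l).length = w.length - (l - 1) := by
  simp [Suf]

lemma get_isSome (w : List α) (m : ℕ) (h : m < w.length) : ∃ x, w[m]? = some x := by
  cases hx : w[m]? with
  | none => rw [List.getElem?_eq_none_iff] at hx; omega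
  | some x => exact ⟨x, rfl⟩

/-- A Lyndon word has no nonempty proper border. -/
lemma lyn_no_border (hasym : ∀ x y, r x y → ¬ r y x) (u : List α) (hlyn : LynR r u)
    (s : ℕ) (hs0 : 0 < s) (hs : s < u.length)
    (hb : ∀ m : ℕ, (u.drop s)[m]? = (u.take (u.length - s))[m]?) : False := by
  have h1 : List.Lex r u (u.drop s) := hlyn s hs0 hs
  have h2 : List.Lex r (u.drop s) u := by
    rw [lex_iff]
    refine ⟨u.length - s, ?_, Or.inl ⟨?_, ?_⟩⟩
    · intro m hm
      rw [hb m, List.getElem?_take_of_lt hm]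
    · apply List.getElem?_eq_none_iff.2
      simp
    · intro hc
      rw [List.getElem?_eq_none_iff] at hc
      omega
  exact lex_asymm hasym h1 h2

/-- A Lyndon word of length ≥ 2 has distinct first and last letters. -/
lemma lyn_first_ne_last (hasym : ∀ x y, r x y → ¬ r y x) (u : List α) (hlyn : LynR r u)
    (h2 : 2 ≤ u.length) (c : α) (h0 : u[0]? = some c)
    (hlast : u[u.length - 1]? = some c) : False := by
  have h1 : List.Lex r u (u.drop (u.length - 1)) := hlyn _ (by omega) (by omega)
  rw [lex_iff] at h1
  obtain ⟨k, ag, dk⟩ := h1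
  have hdget : ∀ m, (u.drop (u.length - 1))[m]? = u[u.length - 1 + m]? := by
    intro m; rw [List.getElem?_drop]
  rcases dk with ⟨hn, hne⟩ | ⟨x, y, hx, hy, hr⟩
  · rw [List.getElem?_eq_none_iff] at hn
    apply hne
    rw [hdget, List.getElem?_eq_none_iff]
    have := (List.length_drop : (u.drop (u.length - 1)).length = _)
    omega
  · rw [hdget] at hy
    have hk : k = 0 := by
      by_contra hc
      rw [List.getElem?_eq_none_iff.2 (by omega)] at hy
      cases hy
    subst hk
    simp only [Nat.add_zero] at hy
    rw [h0] at hx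
    rw [hlast] at hy
    cases hx; cases hy
    exact hasym c c hr hr

/-- Shorthand for applying a period. -/
lemma per_at {w : List α} {i j p : ℕ} (hper : PeriodOn w i j p) (t : ℕ)
    (h1 : i ≤ t) (h2 : t + p ≤ j) : w[t - 1]? = w[t + p - 1]? :=
  hper t (Finset.mem_Icc.2 ⟨h1, by omega⟩) h2

/-- Key boundary lemma: within a maximal repetition, the suffix starting one
period later is lexicographically smaller (for the order chosen so that the
letter breaking the period on the right is small). -/
lemma boundary {w : List α} {i j p l : ℕ}
    (hi : 1 ≤ i) (hjn : j ≤ w.length) (hp : 0 < p) (hper : PeriodOn w i j p)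
    (hbrk : j = w.length ∨
      ∃ x y, w[j]? = some x ∧ w[j - p]? = some y ∧ r x y)
    (hil : i ≤ l) (hlp : l + p ≤ j + 1) :
    List.Lex r (Suf w (l + p)) (Suf w l) := by
  have hpj : p ≤ j := by omega
  rw [lex_iff]
  refine ⟨j + 1 - l - p, ?_, ?_⟩
  · intro m hm
    rw [sget, sget]
    have h := per_at hper (l + m) (by omega) (by omega)
    have e1 : l + m - 1 = l - 1 + m := by omega
    have e2 : l + m + p - 1 = l + p - 1 + m := by omega
    rw [e1, e2] at h
    exact h.symm
  · have e1 : l + p - 1 + (j + 1 - l - p) = j := by omega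
    have e2 : l - 1 + (j + 1 - l - p) = j - p := by omega
    rcases hbrk with hb | ⟨x, y, hx, hy, hr⟩
    · refine Or.inl ⟨?_, ?_⟩
      · rw [sget, e1, List.getElem?_eq_none_iff]
        omega
      · rw [sget, e2]
        obtain ⟨x, hx⟩ := get_isSome w (j - p) (by omega)
        rw [hx]; simp
    · exact Or.inr ⟨x, y, by rw [sget, e1]; exact hx, by rw [sget, e2]; exact hy, hr⟩
/-- If the factor of length `k` at position `l` is Lyndon, then no suffix
starting strictly inside the first `k` letters is lex-smaller than `Suf w l`. -/
lemma no_lex_within {w : List α} (hasym : ∀ x y, r x y → ¬ r y x) {l k m : ℕ}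
    (hl : 1 ≤ l) (hfac : l - 1 + k ≤ w.length) (hlyn : LynR r (Fac w l k))
    (hm1 : l < m) (hm2 : m < l + k)
    (hlex : List.Lex r (Suf w m) (Suf w l)) : False := by
  set u := Fac w l k with hu
  have hulen : u.length = k := flen w l k hfac
  set s := m - l with hs
  have hs0 : 0 < s := by omega
  have hsk : s < k := by omega
  -- border contradiction helper
  have border : (∀ idx, idx < k - s → w[m - 1 + idx]? = w[l - 1 + idx]?) → False := by
    intro hagree
    apply lyn_no_border hasym u hlyn s hs0 (by omega)
    intro mm
    rw [hulen]
    by_cases hmm : mm < k - s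
    · rw [List.getElem?_drop, List.getElem?_take_of_lt hmm]
      rw [hu, fget w l k (s + mm) (by omega), fget w l k mm (by omega)]
      have e : l - 1 + (s + mm) = m - 1 + mm := by omega
      rw [e]
      exact hagree mm hmm
    · have h1 : (u.drop s)[mm]? = none := by
        apply List.getElem?_eq_none_iff.2
        simp [hulen]
        omega
      have h2 : (u.take (k - s))[mm]? = none := by
        apply List.getElem?_eq_none_iff.2
        have : (u.take (k - s)).length ≤ k - s := by
          have := (List.length_take : (u.take (k - s)).length = _)
          simp
        omega
      rw [h1, h2]
  rw [lex_iff] at hlex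
  obtain ⟨d, ag, dk⟩ := hlex
  have hags : ∀ idx, idx < d → w[m - 1 + idx]? = w[l - 1 + idx]? := by
    intro idx hidx
    have := ag idx hidx
    rwa [sget, sget] at this
  rcases dk with ⟨hn, _⟩ | ⟨x, y, hx, hy, hr⟩
  · rw [sget, List.getElem?_eq_none_iff] at hn
    apply border
    intro idx hidx
    exact hags idx (by omega)
  · rw [sget] at hx hy
    have hdn : m - 1 + d < w.length := by
      by_contra hc
      rw [List.getElem?_eq_none_iff.2 (by omega)] at hx
      cases hx
    by_cases hsd : s + d < k
    · -- lex contradiction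
      have h2 : List.Lex r (u.drop s) u := by
        rw [lex_iff]
        refine ⟨d, ?_, Or.inr ⟨x, y, ?_, ?_, hr⟩⟩
        · intro mm hmm
          rw [List.getElem?_drop, hu, fget w l k (s + mm) (by omega), fget w l k mm (by omega)]
          have e : l - 1 + (s + mm) = m - 1 + mm := by omega
          rw [e]
          exact hags mm hmm
        · rw [List.getElem?_drop, hu, fget w l k (s + d) (by omega)]
          have e : l - 1 + (s + d) = m - 1 + d := by omega
          rw [e]; exact hx
        · rw [hu, fget w l k d (by omega)]
          exact hy
      exact lex_asymm hasym (hlyn s hs0 (by omega)) h2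
    · apply border
      intro idx hidx
      exact hags idx (by omega)

/-- Extending a small period from a window of length `p` to the whole run. -/
lemma window_period {w : List α} {i j p δ l : ℕ}
    (hi : 1 ≤ i) (hij2 : i + 2 * p ≤ j + 1) (hper : PeriodOn w i j p)
    (hl1 : i + 1 ≤ l) (hl2 : l + δ ≤ i + p) (hδ : 0 < δ)
    (hwin : ∀ h, h < p → w[l - 1 + h]? = w[l + δ - 1 + h]?) :
    PeriodOn w i j δ := by
  have hp : 0 < p := by omega
  have main : ∀ t, i ≤ t → t + δ ≤ j → w[t - 1]? = w[t + δ - 1]? := by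
    intro t
    induction t using Nat.strong_induction_on with
    | _ t IH =>
      intro hit htj
      by_cases hcase : t < l
      · have e1 := per_at hper t hit (by omega)
        have e2 := hwin (t + p - l) (by omega)
        have e3 := per_at hper (t + δ) (by omega) (by omega)
        have i1 : l - 1 + (t + p - l) = t + p - 1 := by omega
        have i2 : l + δ - 1 + (t + p - l) = t + δ + p - 1 := by omega
        have i3 : t + δ + p - 1 = t + δ + p - 1 := rfl
        rw [i1, i2] at e2
        rw [e1, e2, ← e3]
      · by_cases hc2 : t < l + p
        · have e := hwin (t - l) (by omega)
          have i1 : l - 1 + (t - l) = t - 1 := by omega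
          have i2 : l + δ - 1 + (t - l) = t + δ - 1 := by omega
          rw [i1, i2] at e
          exact e
        · have e1 := per_at hper (t - p) (by omega) (by omega)
          have e2 := per_at hper (t - p + δ) (by omega) (by omega)
          have ih := IH (t - p) (by omega) (by omega) (by omega)
          have i1 : t - p + p - 1 = t - 1 := by omega
          have i2 : t - p + δ + p - 1 = t + δ - 1 := by omega
          have i3 : t - p + δ - 1 = t - p + δ - 1 := rfl
          rw [i1] at e1
          rw [i2] at e2
          rw [← e1, ← e2, ih]
  intro t ht htj
  rw [Finset.mem_Icc] at ht
  exact main t ht.1 htj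

/-- Existence of a lex-minimal element in a list of words. -/
lemma exists_min_list (hasym : ∀ x y, r x y → ¬ r y x)
    (htr : ∀ x y z, r x y → r y z → r x z) (f : ℕ → List α) :
    ∀ L : List ℕ, L ≠ [] → ∃ l ∈ L, ∀ m ∈ L, ¬ List.Lex r (f m) (f l) := by
  intro L
  induction L with
  | nil => intro h; exact absurd rfl h
  | cons a t ih =>
      intro _
      cases t with
      | nil =>
          refine ⟨a, by simp, ?_⟩
          intro m hm
          simp at hm
          rw [hm]
          exact lex_irrefl hasym (f a)
      | cons b t' =>
          obtain ⟨c, hc, hmin⟩ := ih (by simp)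
          by_cases hlt : List.Lex r (f a) (f c)
          · refine ⟨a, by simp, ?_⟩
            intro m hm hcon
            rcases List.mem_cons.1 hm with h | h
            · rw [h] at hcon; exact lex_irrefl hasym (f a) hcon
            · exact hmin m h (lex_trans htr hcon hlt)
          · refine ⟨c, List.mem_cons_of_mem a hc, ?_⟩
            intro m hm hcon
            rcases List.mem_cons.1 hm with h | h
            · rw [h] at hcon; exact hlt hcon
            · exact hmin m h hcon

/-- Two opposite strict orders cannot both make `a` smaller than a
not-longer list `b`. -/
lemma lex_both_false {r r' : α → α → Prop}
    (hpair : ∀ x y, r x y → r' x y → False)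
    (hir : ∀ x y, r x y → x ≠ y) (hir' : ∀ x y, r' x y → x ≠ y)
    {a b : List α} (hlen : b.length ≤ a.length)
    (h1 : List.Lex r a b) (h2 : List.Lex r' a b) : False := by
  rw [lex_iff] at h1 h2
  obtain ⟨k1, ag1, d1⟩ := h1
  obtain ⟨k2, ag2, d2⟩ := h2
  rcases Nat.lt_trichotomy k1 k2 with h | h | h
  · have e := ag2 k1 h
    rcases d1 with ⟨hn, hne⟩ | ⟨x, y, hx, hy, hr⟩
    · exact hne (e.symm.trans hn)
    · rw [hx, hy] at e; cases e; exact hir _ _ hr rfl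
  · subst h
    rcases d1 with ⟨hn, hne⟩ | ⟨x, y, hx, hy, hr⟩
    · rw [List.getElem?_eq_none_iff] at hn
      apply hne
      rw [List.getElem?_eq_none_iff]
      omega
    · rcases d2 with ⟨hn2, hne2⟩ | ⟨x2, y2, hx2, hy2, hr2⟩
      · rw [hx] at hn2; cases hn2
      · rw [hx] at hx2; rw [hy] at hy2; cases hx2; cases hy2
        exact hpair _ _ hr hr2
  · have e := ag1 k2 h
    rcases d2 with ⟨hn, hne⟩ | ⟨x, y, hx, hy, hr⟩
    · exact hne (e.symm.trans hn)
    · rw [hx, hy] at e; cases e; exact hir' _ _ hr rfl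

/-! ### The order associated with a run -/

/-- The strict order chosen for a candidate run `t = ((i,j),p)`: the base
well-ordering if the letter following the run is smaller than the letter one
period earlier, and its opposite otherwise. -/
def relOf (w : List α) (j p : ℕ) : α → α → Prop :=
  if ∃ x y, w[j]? = some x ∧ w[j - p]? = some y ∧
      WellOrderingRel x y
  then WellOrderingRel else flip WellOrderingRel

lemma relOf_tri (w : List α) (j p : ℕ) :
    ∀ x y : α, relOf w j p x y ∨ x = y ∨ relOf w j p y x := by
  intro x y
  unfold relOf
  split
  · exact trichotomous x y
  · rcases trichotomous (r := WellOrderingRel) x y with h | h | h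
    · exact Or.inr (Or.inr h)
    · exact Or.inr (Or.inl h)
    · exact Or.inl h

lemma relOf_asym (w : List α) (j p : ℕ) :
    ∀ x y : α, relOf w j p x y → ¬ relOf w j p y x := by
  intro x y
  unfold relOf
  split
  · exact fun h => asymm h
  · exact fun h => asymm (r := WellOrderingRel) h

lemma relOf_trans (w : List α) (j p : ℕ) :
    ∀ x y z : α, relOf w j p x y → relOf w j p y z → relOf w j p x z := by
  intro x y z
  unfold relOf
  split
  · exact fun h1 h2 => _root_.trans h1 h2
  · exact fun h1 h2 => _root_.trans (r := WellOrderingRel) h2 h1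

lemma relOf_ne (w : List α) (j p : ℕ) :
    ∀ x y : α, relOf w j p x y → x ≠ y := by
  intro x y h he
  subst he
  exact relOf_asym w j p x x h h

lemma relOf_brk {w : List α} {i j p : ℕ} (hrun : IsRun w i j p) :
    j = w.length ∨
      ∃ x y, w[j]? = some x ∧ w[j - p]? = some y ∧
        relOf w j p x y := by
  obtain ⟨hi, hij, hjn, hp, h2p, hper, hmin, hleft, hright⟩ := hrun
  by_cases hj : j = w.length
  · exact Or.inl hj
  · right
    have hjlt : j < w.length := by omega
    rcases hright with h | hne
    · exact absurd h hj
    obtain ⟨x, hx⟩ := get_isSome w j hjlt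
    obtain ⟨y, hy⟩ := get_isSome w (j - p) (by omega)
    have hxy : x ≠ y := by
      intro h
      apply hne
      rw [hx, hy, h]
    rcases trichotomous (r := WellOrderingRel) x y with h | h | h
    · refine ⟨x, y, hx, hy, ?_⟩
      simp only [relOf]
      split
      next hc => exact h
      next hc => exact absurd ⟨x, y, hx, hy, h⟩ hc
    · exact absurd h hxy
    · refine ⟨x, y, hx, hy, ?_⟩
      simp only [relOf]
      split
      next hc =>
        obtain ⟨x', y', hx', hy', hr'⟩ := hc
        rw [hx] at hx'
        rw [hy] at hy'
        cases hx'; cases hy'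
        exact absurd hr' (asymm h)
      next hc => exact h

/-- Two runs with the same minimal period sharing a full period-window are equal. -/
lemma run_glue {w : List α} {i j i' j' p l : ℕ}
    (hrun : IsRun w i j p) (hrun' : IsRun w i' j' p)
    (h1 : i < l) (h2 : i' < l) (h3 : l + p ≤ j + 1) (h4 : l + p ≤ j' + 1) :
    i = i' ∧ j = j' := by
  have hjj : ∀ i1 j1 i2 j2 : ℕ, IsRun w i1 j1 p → IsRun w i2 j2 p →
      i2 < l → l + p ≤ j1 + 1 → l + p ≤ j2 + 1 → ¬ (j1 < j2) := by
    intro i1 j1 i2 j2 hr1 hr2 hi2 hl1 hl2 hlt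
    obtain ⟨h1a, h1b, h1c, h1d, _, hper1, _, _, hbd1⟩ := hr1
    obtain ⟨h2a, h2b, h2c, h2d, _, hper2, _, _, _⟩ := hr2
    have hne : w[j1]? ≠ w[j1 - p]? := by
      rcases hbd1 with h | h
      · exfalso; omega
      · exact h
    apply hne
    have e := per_at hper2 (j1 + 1 - p) (by omega) (by omega)
    have e1 : j1 + 1 - p - 1 = j1 - p := by omega
    have e2 : j1 + 1 - p + p - 1 = j1 := by omega
    rw [e1, e2] at e
    exact e.symm
  have hii : ∀ i1 j1 i2 j2 : ℕ, IsRun w i1 j1 p → IsRun w i2 j2 p →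
      i2 < l → i1 < l → l + p ≤ j1 + 1 → ¬ (i1 < i2) := by
    intro i1 j1 i2 j2 hr1 hr2 hi2 hi1 hl1 hlt
    obtain ⟨h1a, h1b, h1c, h1d, _, hper1, _, _, _⟩ := hr1
    obtain ⟨h2a, h2b, h2c, h2d, _, _, _, hbd2, _⟩ := hr2
    have hne : w[i2 - 2]? ≠ w[i2 + p - 2]? := by
      rcases hbd2 with h | h
      · exfalso; omega
      · exact h
    apply hne
    have e := per_at hper1 (i2 - 1) (by omega) (by omega)
    have e1 : i2 - 1 - 1 = i2 - 2 := by omega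
    have e2 : i2 - 1 + p - 1 = i2 + p - 2 := by omega
    rw [e1, e2] at e
    exact e
  constructor
  · have a1 := hii i j i' j' hrun hrun' h2 h1 h3
    have a2 := hii i' j' i j hrun' hrun h1 h2 h4
    omega
  · have a1 := hjj i j i' j' hrun hrun' h2 h3 h4
    have a2 := hjj i' j' i j hrun' hrun h1 h4 h3
    omega

/-- Every run has a Lyndon root (w.r.t. its chosen order) starting strictly
inside the run. -/
lemma exists_goodAt {w : List α} {i j p : ℕ} (hrun : IsRun w i j p) :
    ∃ l, i < l ∧ l + p ≤ j + 1 ∧ LynR (relOf w j p) (Fac w l p) := by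
  have hrun' := hrun
  obtain ⟨hi, hij, hjn, hp, h2p, hper, hmin, hleft, hright⟩ := hrun'
  set r := relOf w j p with hrdef
  have htri := relOf_tri w j p
  have hasym := relOf_asym w j p
  have htr := relOf_trans w j p
  have hi2p : i + 2 * p ≤ j + 1 := by omega
  have hLne : List.range' (i + 1) p ≠ [] := by
    intro h
    have := congrArg List.length h
    simp at this
    omega
  obtain ⟨l, hlL, hlmin⟩ :=
    exists_min_list hasym htr (fun u => Fac w u p) (List.range' (i + 1) p) hLne
  simp only [List.mem_range'_1] at hlL
  have hl1 : i + 1 ≤ l := hlL.1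
  have hl2 : l ≤ i + p := by omega
  have hmin' : ∀ σ, i + 1 ≤ σ → σ ≤ i + p → ¬ List.Lex r (Fac w σ p) (Fac w l p) := by
    intro σ ha hb
    exact hlmin σ (by simp only [List.mem_range'_1]; omega)
  have hRlen : ∀ l', l' ≤ i + p → (Fac w l' p).length = p := by
    intro l' h
    exact flen w l' p (by omega)
  have hRl_len : (Fac w l p).length = p := hRlen l hl2
  -- rotations of the root are again factors at positions in the window
  have key : ∀ t0, 0 < t0 → t0 < p → ∃ σ, i + 1 ≤ σ ∧ σ ≤ i + p ∧
      (σ = l + t0 ∨ σ + p = l + t0) ∧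
      Fac w σ p = (Fac w l p).drop t0 ++ (Fac w l p).take t0 := by
    intro t0 ht0 htp
    have hdroplen : ((Fac w l p).drop t0).length = p - t0 := by
      rw [List.length_drop, hRl_len]
    by_cases hsm : l + t0 ≤ i + p
    · refine ⟨l + t0, by omega, hsm, Or.inl rfl, List.ext_getElem? ?_⟩
      intro hh
      by_cases hc1 : hh < p - t0
      · rw [List.getElem?_append_left (by omega), List.getElem?_drop,
          fget w (l + t0) p hh (by omega), fget w l p (t0 + hh) (by omega)]
        congr 1
        omega
      · by_cases hc2 : hh < p
        · rw [List.getElem?_append_right (by omega), hdroplen,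
            List.getElem?_take_of_lt (by omega),
            fget w (l + t0) p hh (by omega), fget w l p (hh - (p - t0)) (by omega)]
          have e := per_at hper (l + t0 + hh - p) (by omega) (by omega)
          have e1 : l + t0 + hh - p - 1 = l - 1 + (hh - (p - t0)) := by omega
          have e2 : l + t0 + hh - p + p - 1 = l + t0 - 1 + hh := by omega
          rw [e1, e2] at e
          exact e.symm
        · rw [fget_none w (l + t0) p hh (by omega)]
          symm
          apply List.getElem?_eq_none_iff.2
          rw [List.length_append, hdroplen, List.length_take, hRl_len]
          omega
    · refine ⟨l + t0 - p, by omega, by omega, Or.inr (by omega), List.ext_getElem? ?_⟩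
      intro hh
      by_cases hc1 : hh < p - t0
      · rw [List.getElem?_append_left (by omega), List.getElem?_drop,
          fget w (l + t0 - p) p hh (by omega), fget w l p (t0 + hh) (by omega)]
        have e := per_at hper (l + t0 - p + hh) (by omega) (by omega)
        have e1 : l + t0 - p + hh - 1 = l + t0 - p - 1 + hh := by omega
        have e2 : l + t0 - p + hh + p - 1 = l - 1 + (t0 + hh) := by omega
        rw [e1, e2] at e
        exact e
      · by_cases hc2 : hh < p
        · rw [List.getElem?_append_right (by omega), hdroplen,
            List.getElem?_take_of_lt (by omega),
            fget w (l + t0 - p) p hh (by omega), fget w l p (hh - (p - t0)) (by omega)]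
          congr 1
          omega
        · rw [fget_none w (l + t0 - p) p hh (by omega)]
          symm
          apply List.getElem?_eq_none_iff.2
          rw [List.length_append, hdroplen, List.length_take, hRl_len]
          omega
  refine ⟨l, by omega, by omega, ?_⟩
  intro t0 ht0 htlen
  rw [hRl_len] at htlen
  by_contra hcon
  have hyne : (Fac w l p).drop t0 ≠ Fac w l p := by
    intro h
    have := congrArg List.length h
    rw [List.length_drop, hRl_len] at this
    omega
  have hylex : List.Lex r ((Fac w l p).drop t0) (Fac w l p) := by
    rcases lex_total htri _ _ hyne with h | h
    · exact h
    · exact absurd h hcon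
  obtain ⟨σ, hσ1, hσ2, hσalt, hσeq⟩ := key t0 ht0 htlen
  have hylen : ((Fac w l p).drop t0).length = p - t0 := by
    rw [List.length_drop, hRl_len]
  rw [lex_iff] at hylex
  obtain ⟨d, ag, dk⟩ := hylex
  rcases dk with ⟨hn, hne⟩ | ⟨x, y, hx, hy, hr⟩
  · -- the suffix is a prefix of the root
    have hd1 : p - t0 ≤ d := by
      rw [List.getElem?_eq_none_iff, hylen] at hn
      exact hn
    have hd2 : d < p := by
      by_contra hc
      apply hne
      rw [List.getElem?_eq_none_iff, hRl_len]
      omega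
    have ytake : (Fac w l p).drop t0 = (Fac w l p).take (p - t0) := by
      apply List.ext_getElem?
      intro mm
      by_cases hmm : mm < p - t0
      · rw [List.getElem?_take_of_lt hmm]
        exact ag mm (by omega)
      · rw [List.getElem?_eq_none_iff.2 (by rw [hylen]; omega),
          List.getElem?_eq_none_iff.2 (by rw [List.length_take]; omega)]
    by_cases hRσ : Fac w σ p = Fac w l p
    · -- equal rotation: a smaller period, contradiction with minimality
      have hwin' : ∀ hh, hh < p → w[σ - 1 + hh]? = w[l - 1 + hh]? := by
        intro hh h
        have : (Fac w σ p)[hh]? = (Fac w l p)[hh]? := by rw [hRσ]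
        rwa [fget w σ p hh h, fget w l p hh h] at this
      rcases hσalt with hc | hc
      · -- σ = l + t0 > l ; δ = t0
        have hperδ : PeriodOn w i j t0 := by
          apply window_period hi hi2p hper hl1 (by omega) ht0
          intro hh h
          have := (hwin' hh h).symm
          have e : σ - 1 + hh = l + t0 - 1 + hh := by omega
          rw [e] at this
          exact this
        exact hmin t0 (Finset.mem_Ico.2 ⟨by omega, htlen⟩) hperδ
      · -- σ = l + t0 - p < l ; δ = l - σ = p - t0
        have hδ : σ + (l - σ) = l := by omega
        have hperδ : PeriodOn w i j (l - σ) := by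
          apply window_period hi hi2p hper hσ1 (by omega) (by omega)
          intro hh h
          have := hwin' hh h
          have e : l - 1 + hh = σ + (l - σ) - 1 + hh := by omega
          rw [e] at this
          exact this
        exact hmin (l - σ) (Finset.mem_Ico.2 ⟨by omega, by omega⟩) hperδ
    · -- strict comparison; rotate once more to contradict minimality
      have hlexσ : List.Lex r (Fac w l p) (Fac w σ p) := by
        rcases lex_total htri _ _ hRσ with h | h
        · exact absurd h (hmin' σ hσ1 hσ2)
        · exact h
      have h1 : Fac w l p = (Fac w l p).take (p - t0) ++ (Fac w l p).drop (p - t0) :=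
        (List.take_append_drop _ _).symm
      have h2 : Fac w σ p = (Fac w l p).take (p - t0) ++ (Fac w l p).take t0 := by
        rw [hσeq, ytake]
      have hcancel : List.Lex r ((Fac w l p).drop (p - t0)) ((Fac w l p).take t0) := by
        apply lex_append_cancel hasym ((Fac w l p).take (p - t0))
        rw [← h1, ← h2]
        exact hlexσ
      have happ : List.Lex r
          ((Fac w l p).drop (p - t0) ++ (Fac w l p).take (p - t0))
          ((Fac w l p).take t0 ++ (Fac w l p).drop t0) := by
        apply lex_append_right_of_length_eq _ _ _ _ ?_ hcancel
        rw [List.length_drop, List.length_take, hRl_len]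
        omega
      obtain ⟨σ₂, hσ₂1, hσ₂2, _, hσ₂eq⟩ := key (p - t0) (by omega) (by omega)
      have e3 : (Fac w l p).take t0 ++ (Fac w l p).drop t0 = Fac w l p :=
        List.take_append_drop _ _
      rw [e3] at happ
      rw [← hσ₂eq] at happ
      exact hmin' σ₂ hσ₂1 hσ₂2 happ
  · -- genuine difference: the rotation at σ would be smaller, contradiction
    have hd : d < p - t0 := by
      by_contra hc
      rw [List.getElem?_eq_none_iff.2 (by rw [hylen]; omega)] at hx
      cases hx
    have hlexσ : List.Lex r (Fac w σ p) (Fac w l p) := by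
      rw [lex_iff]
      refine ⟨d, ?_, Or.inr ⟨x, y, ?_, ?_, hr⟩⟩
      · intro m hm
        rw [hσeq, List.getElem?_append_left (by rw [hylen]; omega)]
        exact ag m hm
      · rw [hσeq, List.getElem?_append_left (by rw [hylen]; omega)]
        exact hx
      · exact hy
    exact hmin' σ hσ1 hσ2 hlexσ

/-- Injectivity: two runs sharing the (1-based) starting position of a Lyndon
root coincide. -/
lemma goodAt_inj {w : List α} {i j p i' j' p' l : ℕ}
    (hrun : IsRun w i j p) (hrun' : IsRun w i' j' p')
    (hgi : i < l) (hgj : l + p ≤ j + 1) (hglyn : LynR (relOf w j p) (Fac w l p))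
    (hgi' : i' < l) (hgj' : l + p' ≤ j' + 1)
    (hglyn' : LynR (relOf w j' p') (Fac w l p')) :
    i = i' ∧ j = j' ∧ p = p' := by
  have hr1 := hrun
  have hr2 := hrun'
  obtain ⟨hi, hij, hjn, hp, h2p, hper, hmin, hleft, hright⟩ := hr1
  obtain ⟨hi', hij', hjn', hp', h2p', hper', hmin', hleft', hright'⟩ := hr2
  -- same-relation core argument
  have core : ∀ i1 j1 p1 i2 j2 p2 : ℕ, ∀ ρ : α → α → Prop,
      (∀ x y, ρ x y → ¬ ρ y x) →
      IsRun w i1 j1 p1 → i1 < l → l + p1 ≤ j1 + 1 →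
      (j1 = w.length ∨
        ∃ x y, w[j1]? = some x ∧ w[j1 - p1]? = some y ∧ ρ x y) →
      IsRun w i2 j2 p2 → i2 < l → l + p2 ≤ j2 + 1 →
      LynR ρ (Fac w l p2) → p1 < p2 → False := by
    intro i1 j1 p1 i2 j2 p2 ρ has hrn1 hl1 hlp1 hbrk hrn2 hl2 hlp2 hlyn hplt
    obtain ⟨ha1, hb1, hc1, hd1, he1, hf1, _, _, _⟩ := hrn1
    obtain ⟨ha2, hb2, hc2, hd2, he2, hf2, _, _, _⟩ := hrn2
    have hbd := boundary (w := w) ha1 hc1 hd1 hf1 hbrk (by omega : i1 ≤ l) hlp1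
    exact no_lex_within has (by omega : 1 ≤ l)
      (by omega : l - 1 + p2 ≤ w.length) hlyn
      (by omega : l < l + p1) (by omega : l + p1 < l + p2) hbd
  -- first-letter = last-letter argument when one period is 1
  have firstlast : ∀ i1 j1 p1 i2 j2 p2 : ℕ, ∀ ρ2 : α → α → Prop,
      (∀ x y, ρ2 x y → ¬ ρ2 y x) →
      IsRun w i1 j1 p1 → IsRun w i2 j2 p2 →
      i1 < l → l + p1 ≤ j1 + 1 → i2 < l → l + p2 ≤ j2 + 1 →
      LynR ρ2 (Fac w l p2) → p1 = 1 → 2 ≤ p2 → False := by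
    intro i1 j1 p1 i2 j2 p2 ρ2 has2 hrn1 hrn2 hil1 hlp1 hil2 hlp2 hlyn2 hp1 hp2
    subst hp1
    obtain ⟨ha1, hb1, hc1, hd1, he1, hf1, _, _, _⟩ := hrn1
    obtain ⟨ha2, hb2, hc2, hd2, he2, hf2, _, _, _⟩ := hrn2
    have e1 := per_at hf1 (l - 1) (by omega) (by omega)
    have e2 := per_at hf2 (l - 1) (by omega) (by omega)
    have i1e : l - 1 - 1 = l - 2 := by omega
    have i2e : l - 1 + 1 - 1 = l - 1 := by omega
    have i3e : l - 1 + p2 - 1 = l + p2 - 2 := by omega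
    rw [i1e, i2e] at e1
    rw [i1e, i3e] at e2
    have hc : w[l - 1]? = w[l + p2 - 2]? := e1.symm.trans e2
    obtain ⟨c, hcv⟩ := get_isSome w (l - 1) (by omega)
    have hlast : w[l + p2 - 2]? = some c := hc ▸ hcv
    have hulen : (Fac w l p2).length = p2 := flen w l p2 (by omega)
    apply lyn_first_ne_last has2 (Fac w l p2) hlyn2 (by omega) c
    · rw [fget w l p2 0 (by omega)]
      simpa using hcv
    · rw [hulen, fget w l p2 (p2 - 1) (by omega)]
      have : l - 1 + (p2 - 1) = l + p2 - 2 := by omega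
      rw [this]
      exact hlast
  -- the two relations are equal or opposite
  have hdico : (relOf w j p = relOf w j' p') ∨
      (∀ x y : α, relOf w j p x y → relOf w j' p' x y → False) := by
    by_cases hC : (∃ x y, w[j]? = some x ∧ w[j - p]? = some y ∧
        WellOrderingRel x y)
      <;> by_cases hC' : (∃ x y, w[j']? = some x ∧ w[j' - p']? = some y ∧
        WellOrderingRel x y)
    · left; unfold relOf; rw [if_pos hC, if_pos hC']
    · right
      intro x y hxy hxy'
      unfold relOf at hxy hxy'
      rw [if_pos hC] at hxy
      rw [if_neg hC'] at hxy'
      exact asymm hxy hxy'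
    · right
      intro x y hxy hxy'
      unfold relOf at hxy hxy'
      rw [if_neg hC] at hxy
      rw [if_pos hC'] at hxy'
      exact asymm hxy' hxy
    · left; unfold relOf; rw [if_neg hC, if_neg hC']
  have hpp : p = p' := by
    rcases hdico with heq | hopp
    · by_contra hne
      have hbrk := relOf_brk hrun
      have hbrk' := relOf_brk hrun'
      rw [heq] at hbrk
      rcases Nat.lt_or_ge p p' with hlt | hge
      · exact core i j p i' j' p' (relOf w j' p') (relOf_asym w j' p')
          hrun hgi hgj hbrk hrun' hgi' hgj' hglyn' hlt
      · have hlt' : p' < p := by omega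
        rw [← heq] at hbrk' hglyn'
        exact core i' j' p' i j p (relOf w j p) (relOf_asym w j p)
          hrun' hgi' hgj' hbrk' hrun hgi hgj hglyn hlt'
    · by_contra hne
      by_cases hp1 : p = 1
      · exact firstlast i j p i' j' p' (relOf w j' p') (relOf_asym w j' p')
          hrun hrun' hgi hgj hgi' hgj' hglyn' hp1 (by omega)
      · by_cases hp1' : p' = 1
        · exact firstlast i' j' p' i j p (relOf w j p) (relOf_asym w j p)
            hrun' hrun hgi' hgj' hgi hgj hglyn hp1' (by omega)
        · -- both periods at least 2 : contradiction via opposite orders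
          have hsub : ∀ i1 j1 p1 : ℕ, ∀ ρ1 : α → α → Prop,
              (∀ x y, ρ1 x y → ¬ ρ1 y x) →
              (∀ x y : α, ρ1 x y ∨ x = y ∨ ρ1 y x) →
              IsRun w i1 j1 p1 → i1 < l → l + p1 ≤ j1 + 1 → 2 ≤ p1 →
              LynR ρ1 (Fac w l p1) →
              List.Lex ρ1 (Suf w l) (Suf w (l + 1)) := by
            intro i1 j1 p1 ρ1 has1 htri1 hrn1 hil1 hlp1 hp21 hlyn1
            obtain ⟨ha1, hb1, hc1, hd1, he1, hf1, _, _, _⟩ := hrn1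
            have hnot : ¬ List.Lex ρ1 (Suf w (l + 1)) (Suf w l) := fun hcc =>
              no_lex_within has1 (by omega) (by omega : l - 1 + p1 ≤ w.length)
                hlyn1 (by omega) (by omega : l + 1 < l + p1) hcc
            have hnel : Suf w l ≠ Suf w (l + 1) := by
              intro h
              have := congrArg List.length h
              rw [suf_len, suf_len] at this
              omega
            rcases lex_total htri1 _ _ hnel with h | h
            · exact h
            · exact absurd h hnot
          have hA := hsub i j p (relOf w j p) (relOf_asym w j p)
            (relOf_tri w j p) hrun hgi hgj (by omega) hglyn
          have hB := hsub i' j' p' (relOf w j' p') (relOf_asym w j' p')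
            (relOf_tri w j' p') hrun' hgi' hgj' (by omega) hglyn'
          refine lex_both_false hopp (relOf_ne w j p) (relOf_ne w j' p')
            ?_ hA hB
          rw [suf_len, suf_len]
          omega
  subst hpp
  obtain ⟨e1, e2⟩ := run_glue hrun hrun' hgi hgi' hgj hgj'
  exact ⟨e1, e2, rfl⟩

end RunsAux

/-- The runs theorem: any (nonempty) string of length `n` has strictly fewer
than `n` runs. -/
theorem runs_theorem {α : Type*} (w : List α) (h : 1 ≤ w.length) :
    ((((Finset.Icc 1 w.length) ×ˢ (Finset.Icc 1 w.length)) ×ˢ (Finset.Icc 1 w.length)).filter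
      (fun t : (ℕ × ℕ) × ℕ => IsRun w t.1.1 t.1.2 t.2)).card < w.length := by
  classical
  have hex : ∀ t : (ℕ × ℕ) × ℕ, IsRun w t.1.1 t.1.2 t.2 →
      ∃ l, t.1.1 < l ∧ l + t.2 ≤ t.1.2 + 1 ∧
        RunsAux.LynR (RunsAux.relOf w t.1.2 t.2) (RunsAux.Fac w l t.2) :=
    fun t ht => RunsAux.exists_goodAt ht
  refine lt_of_le_of_lt (Finset.card_le_card_of_injOn
    (t := Finset.Icc 2 w.length)
    (fun t => if h : IsRun w t.1.1 t.1.2 t.2 then (hex t h).choose else 0)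
    ?_ ?_) ?_
  · intro t ht
    have hr := (Finset.mem_filter.1 ht).2
    have hs := (hex t hr).choose_spec
    simp only [dif_pos hr]
    rw [Finset.mem_coe, Finset.mem_Icc]
    have b1 := hr.1
    have b3 := hr.2.2.1
    have b4 := hr.2.2.2.1
    have c1 := hs.1
    have c2 := hs.2.1
    omega
  · intro t ht t' ht' heq
    have hr := (Finset.mem_filter.1 (Finset.mem_coe.1 ht)).2
    have hr' := (Finset.mem_filter.1 (Finset.mem_coe.1 ht')).2
    simp only [dif_pos hr, dif_pos hr'] at heq
    have hs := (hex t hr).choose_spec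
    have hs' := (hex t' hr').choose_spec
    rw [heq] at hs
    obtain ⟨e1, e2, e3⟩ := RunsAux.goodAt_inj hr hr'
      hs.1 hs.2.1 hs.2.2 hs'.1 hs'.2.1 hs'.2.2
    exact Prod.ext (Prod.ext e1 e2) e3
  · rw [Nat.card_Icc]
    omega
end

section
/- Let w be a string of length n, x a position with 1 ≤ x < n, A_x = Substr(w[1..x]) and B_x = Substr(w[x..n]). Then the substrings in (A_x ∪ B_{x+1}) \ (A_x ∪ B_{x+2}) are exactly the prefixes of w[x+1..n] of length greater than max(α,β), where α is the maximum length of a prefix of w[x+1..n] occurring in w[1..x] and β is the maximum length of a prefix of w[x+1..n] having an occurrence starting at a position ≥ x+2. Consequently |A_x ∪ B_{x+1}| - |A_x ∪ B_{x+2}| = n - x - max(α,β). -/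
open scoped Classical

/-- The set of (nonempty) substrings of `u`: the factors `u[i..j]` for
`1 ≤ i ≤ j ≤ |u|` (1-based positions). -/
noncomputable def SubstrF {α : Type*} (u : List α) : Finset (List α) :=
  (((Finset.Icc 1 u.length) ×ˢ (Finset.Icc 1 u.length)).filter
      (fun q : ℕ × ℕ => q.1 ≤ q.2)).image
    (fun q : ℕ × ℕ => (u.drop (q.1 - 1)).take (q.2 - q.1 + 1))

/-- The set `N(w,k)` of distinct (nonempty) substrings of `w` having an
occurrence `[i,j]` not crossing position `k`, i.e. with `j < k` or `k < i`. -/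
noncomputable def NSet {α : Type*} (w : List α) (k : ℕ) : Finset (List α) :=
  (((Finset.Icc 1 w.length) ×ˢ (Finset.Icc 1 w.length)).filter
      (fun q : ℕ × ℕ => q.1 ≤ q.2 ∧ (q.2 < k ∨ k < q.1))).image
    (fun q : ℕ × ℕ => (w.drop (q.1 - 1)).take (q.2 - q.1 + 1))

/-!
A substring of `u = w[x+1..n]` that does not occur in its tail `w[x+2..n]` can occur in `u` only
as a prefix, so the removed substrings are the prefixes of `u` occurring neither in `w[1..x]` nor
in `w[x+2..n]`. Both properties pass to shorter prefixes, so the prefix of length `ℓ` has the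
first iff `ℓ ≤ α` and the second iff `ℓ ≤ β`. Distinct lengths give distinct prefixes, whence
the count.
-/

namespace List

variable {α : Type*}

theorem injOn_take (l : List α) : Set.InjOn l.take (Set.Iic l.length) := by
  intro i hi j hj hij
  simp only [Set.mem_Iic] at hi hj
  have := take_eq_take_iff.1 hij
  omega

theorem take_infix_iff_le_of_isGreatest {u v : List α} {m a ℓ : ℕ}
    (h : IsGreatest {ℓ | ℓ ≤ m ∧ u.take ℓ <:+: v} a) (hℓ : ℓ ≤ m) :
    u.take ℓ <:+: v ↔ ℓ ≤ a :=
  ⟨fun hv => h.2 ⟨hℓ, hv⟩, fun hle => (take_prefix_take_left hle).isInfix.trans h.1.2⟩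

theorem filter_Icc_not_take_infix_eq_Icc {u v v' : List α} {a b : ℕ}
    (ha : IsGreatest {ℓ | ℓ ≤ u.length ∧ u.take ℓ <:+: v} a)
    (hb : IsGreatest {ℓ | ℓ ≤ u.length ∧ u.take ℓ <:+: v'} b) :
    (Finset.Icc 1 u.length).filter (fun ℓ => ¬ u.take ℓ <:+: v ∧ ¬ u.take ℓ <:+: v')
      = Finset.Icc (max a b + 1) u.length := by
  ext ℓ
  simp only [Finset.mem_filter, Finset.mem_Icc]
  constructor
  · rintro ⟨⟨-, hℓ⟩, hv, hv'⟩
    rw [take_infix_iff_le_of_isGreatest ha hℓ] at hv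
    rw [take_infix_iff_le_of_isGreatest hb hℓ] at hv'
    omega
  · rintro ⟨hℓ', hℓ⟩
    rw [take_infix_iff_le_of_isGreatest ha hℓ, take_infix_iff_le_of_isGreatest hb hℓ]
    omega

end List

section Substrings

variable {α : Type*}

theorem mem_SubstrF {u l : List α} : l ∈ SubstrF u ↔ l ≠ [] ∧ l <:+: u := by
  simp only [SubstrF, Finset.mem_image, Finset.mem_filter, Finset.mem_product, Finset.mem_Icc]
  constructor
  · rintro ⟨⟨i, j⟩, ⟨⟨⟨hi, -⟩, -, hj⟩, hij⟩, rfl⟩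
    refine ⟨List.ne_nil_of_length_pos ?_,
      ((u.drop (i - 1)).take_prefix _).isInfix.trans (u.drop_suffix _).isInfix⟩
    simp only [List.length_take, List.length_drop] at *
    omega
  · rintro ⟨hne, s, t, rfl⟩
    have hl : 0 < l.length := List.length_pos_iff.2 hne
    refine ⟨(s.length + 1, s.length + l.length), ?_, ?_⟩
    · simp only [List.length_append]
      omega
    · have hi : s.length + 1 - 1 = s.length := by omega
      have hj : s.length + l.length - (s.length + 1) + 1 = l.length := by omega
      simp only [hi, hj, List.append_assoc, List.drop_left, List.take_left]

theorem SubstrF_mono {u v : List α} (h : u <:+: v) : SubstrF u ⊆ SubstrF v := fun _ hl =>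
  have hl := mem_SubstrF.1 hl
  mem_SubstrF.2 ⟨hl.1, hl.2.trans h⟩

theorem SubstrF_tail_subset (u : List α) : SubstrF u.tail ⊆ SubstrF u :=
  SubstrF_mono u.tail_suffix.isInfix

theorem SubstrF_union_sdiff_union_tail (v u : List α) :
    (SubstrF v ∪ SubstrF u) \ (SubstrF v ∪ SubstrF u.tail)
      = ((Finset.Icc 1 u.length).filter
          fun ℓ => ¬ u.take ℓ <:+: v ∧ ¬ u.take ℓ <:+: u.tail).image u.take := by
  ext l
  simp only [Finset.mem_sdiff, Finset.mem_union, Finset.mem_image, Finset.mem_filter,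
    Finset.mem_Icc, mem_SubstrF]
  constructor
  · rintro ⟨hl, hnot⟩
    have hne : l ≠ [] := hl.elim And.left And.left
    have hv : ¬ l <:+: v := fun h => hnot (Or.inl ⟨hne, h⟩)
    have htail : ¬ l <:+: u.tail := fun h => hnot (Or.inr ⟨hne, h⟩)
    have hpre : l <+: u := by
      obtain ⟨-, hu⟩ := hl.resolve_left (fun h => hv h.2)
      cases u with
      | nil => exact absurd hu htail
      | cons a u => exact (List.infix_cons_iff.1 hu).resolve_right htail
    have hlen : l = u.take l.length := List.prefix_iff_eq_take.1 hpre
    refine ⟨l.length, ⟨⟨List.length_pos_iff.2 hne, hpre.length_le⟩, ?_⟩, hlen.symm⟩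
    rw [← hlen]
    exact ⟨hv, htail⟩
  · rintro ⟨ℓ, ⟨⟨hℓ, hℓu⟩, hv, htail⟩, rfl⟩
    have hne : u.take ℓ ≠ [] := List.ne_nil_of_length_pos (by rw [List.length_take]; omega)
    exact ⟨Or.inr ⟨hne, (u.take_prefix ℓ).isInfix⟩, by tauto⟩

theorem occAt_iff_prefix_drop {w p : List α} {s : ℕ} :
    OccAt w p s ↔ 1 ≤ s ∧ s ≤ w.length + 1 ∧ p <+: w.drop (s - 1) := by
  rw [List.prefix_iff_eq_take, eq_comm]
  constructor
  · rintro ⟨hs, hlen, h⟩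
    exact ⟨hs, by omega, h⟩
  · rintro ⟨hs, hsw, h⟩
    refine ⟨hs, ?_, h⟩
    have := congrArg List.length h
    rw [List.length_take, List.length_drop] at this
    omega

theorem exists_occAt_gt_iff_infix_drop {w p : List α} {k : ℕ}
    (hk : k ≤ w.length) : (∃ s, k + 1 ≤ s ∧ OccAt w p s) ↔ p <:+: w.drop k := by
  simp only [occAt_iff_prefix_drop]
  constructor
  · rintro ⟨s, hs, -, -, hp⟩
    have hdrop : w.drop (s - 1) = (w.drop k).drop (s - 1 - k) := by
      rw [List.drop_drop]
      congr 1
      omega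
    exact (hdrop ▸ hp).isInfix.trans (List.drop_suffix _ _).isInfix
  · intro h
    obtain ⟨t, hpt, hts⟩ := List.infix_iff_prefix_suffix.1 h
    have hlen : (w.drop k).length = w.length - k := List.length_drop
    refine ⟨k + ((w.drop k).length - t.length) + 1, by omega, by omega, by omega, ?_⟩
    rwa [Nat.add_sub_cancel, ← List.drop_drop, ← List.suffix_iff_eq_drop.1 hts]

end Substrings

theorem removed_substrings_are_long_prefixes_general {α : Type*} (w : List α) (n x : ℕ)
    (hn : w.length = n) (hx2 : x < n) (al be : ℕ)
    (hal : IsGreatest {ℓ : ℕ | ℓ ≤ n - x ∧ ((w.drop x).take ℓ) <:+: (w.take x)} al)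
    (hbe : IsGreatest
      {ℓ : ℕ | ℓ ≤ n - x ∧ ∃ s, x + 2 ≤ s ∧ OccAt w ((w.drop x).take ℓ) s} be) :
    (SubstrF (w.take x) ∪ SubstrF (w.drop x)) \ (SubstrF (w.take x) ∪ SubstrF (w.drop (x + 1)))
        = (Finset.Icc (max al be + 1) (n - x)).image (fun ℓ => (w.drop x).take ℓ)
    ∧ (SubstrF (w.take x) ∪ SubstrF (w.drop x)).card
        - (SubstrF (w.take x) ∪ SubstrF (w.drop (x + 1))).card = n - x - max al be := by
  set u := w.drop x
  have hu : u.length = n - x := by simp [u, hn]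
  have htail : w.drop (x + 1) = u.tail := List.tail_drop.symm
  rw [← hu] at hal hbe
  have hbe' : IsGreatest {ℓ | ℓ ≤ u.length ∧ u.take ℓ <:+: u.tail} be := by
    simp_rw [← htail, ← exists_occAt_gt_iff_infix_drop (by omega : x + 1 ≤ w.length)]
    exact hbe
  have hremoved : (SubstrF (w.take x) ∪ SubstrF u) \ (SubstrF (w.take x) ∪ SubstrF u.tail)
      = (Finset.Icc (max al be + 1) (n - x)).image u.take := by
    rw [SubstrF_union_sdiff_union_tail, List.filter_Icc_not_take_infix_eq_Icc hal hbe', hu]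
  rw [htail]
  refine ⟨hremoved, ?_⟩
  have hinj : Set.InjOn u.take (Finset.Icc (max al be + 1) (n - x)) :=
    u.injOn_take.mono (by simpa [hu] using Set.Icc_subset_Iic_self)
  rw [← Finset.card_sdiff_of_subset (Finset.union_subset_union_right (SubstrF_tail_subset u)),
    hremoved, Finset.card_image_of_injOn hinj, Nat.card_Icc]
  omega

/-- With `A_x = Substr(w[1..x])` and `B_y = Substr(w[y..n])`, the substrings in
`(A_x ∪ B_{x+1}) \ (A_x ∪ B_{x+2})` are exactly the prefixes of `w[x+1..n]` of
length greater than `max α β`, where `α` (= LPnF) is the maximum length of a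
prefix of `w[x+1..n]` occurring in `w[1..x]` and `β` (= LNF) is the maximum
length of a prefix of `w[x+1..n]` occurring at a starting position `≥ x+2`.
Consequently `|A_x ∪ B_{x+1}| - |A_x ∪ B_{x+2}| = n - x - max α β`. -/
theorem removed_substrings_are_long_prefixes {α : Type*} (w : List α) (n x : ℕ)
    (hn : w.length = n) (hx1 : 1 ≤ x) (hx2 : x < n) (al be : ℕ)
    (hal : IsGreatest {ℓ : ℕ | ℓ ≤ n - x ∧ ((w.drop x).take ℓ) <:+: (w.take x)} al)
    (hbe : IsGreatest
      {ℓ : ℕ | ℓ ≤ n - x ∧ ∃ s, x + 2 ≤ s ∧ OccAt w ((w.drop x).take ℓ) s} be) :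
    (SubstrF (w.take x) ∪ SubstrF (w.drop x)) \ (SubstrF (w.take x) ∪ SubstrF (w.drop (x + 1)))
        = (Finset.Icc (max al be + 1) (n - x)).image (fun ℓ => (w.drop x).take ℓ)
    ∧ (SubstrF (w.take x) ∪ SubstrF (w.drop x)).card
        - (SubstrF (w.take x) ∪ SubstrF (w.drop (x + 1))).card = n - x - max al be :=
  removed_substrings_are_long_prefixes_general w n x hn hx2 al be hal hbe
end

section
/- If a string w of length n > 2 contains two equal characters at positions i < j, then there exists a position k with N(w,k) < k(k-1)/2 + (n-k)(n-k+1)/2. -/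
open scoped Classical

private lemma Tcard (m : ℕ) :
    (((Finset.Icc 1 m) ×ˢ (Finset.Icc 1 m)).filter
      (fun q : ℕ × ℕ => q.1 ≤ q.2)).card = m * (m + 1) / 2 := by
  rw [Finset.card_eq_sum_card_fiberwise
    (f := Prod.snd) (t := Finset.Icc 1 m)
    (fun x hx => by
      simp only [Finset.mem_coe, Finset.mem_filter, Finset.mem_product] at hx
      exact hx.1.2)]
  have : ∀ b ∈ Finset.Icc 1 m,
      ((((Finset.Icc 1 m) ×ˢ (Finset.Icc 1 m)).filter
        (fun q : ℕ × ℕ => q.1 ≤ q.2)).filter (fun x => x.2 = b)).card = b := by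
    intro b hb
    simp only [Finset.mem_Icc] at hb
    have : ((((Finset.Icc 1 m) ×ˢ (Finset.Icc 1 m)).filter
        (fun q : ℕ × ℕ => q.1 ≤ q.2)).filter (fun x => x.2 = b))
        = (Finset.Icc 1 b) ×ˢ ({b} : Finset ℕ) := by
      ext ⟨a, c⟩
      simp only [Finset.mem_filter, Finset.mem_product, Finset.mem_Icc,
        Finset.mem_singleton]
      omega
    rw [this, Finset.card_product, Finset.card_singleton, Nat.card_Icc]
    omega
  rw [Finset.sum_congr rfl this]
  have h2 : (∑ b ∈ Finset.Icc 1 m, b) * 2 = m * (m + 1) := by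
    have he : ∑ b ∈ Finset.Icc 1 m, b = ∑ b ∈ Finset.range (m+1), b := by
      rw [Finset.range_eq_Ico, ← Finset.Ico_add_one_right_eq_Icc]
      rw [Finset.sum_Ico_eq_sum_range, Finset.sum_Ico_eq_sum_range]
      simp only [Nat.succ_sub_one, Nat.sub_zero, Nat.zero_add]
      rw [Finset.sum_range_succ']
      simp [Nat.add_comm]
    rw [he, Finset.sum_range_id_mul_two]
    simp [Nat.mul_comm]
  omega

/-- If a string `w` of length `n > 2` has two equal characters at positions
`i < j`, then `N(w,k) < k(k-1)/2 + (n-k)(n-k+1)/2` for some position `k`. -/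
theorem N_of_repeated_character {α : Type*} (w : List α) (n i j : ℕ)
    (hn : w.length = n) (hn2 : 2 < n) (hi : 1 ≤ i) (hij : i < j) (hj : j ≤ n)
    (heq : w[i - 1]? = w[j - 1]?) :
    ∃ k, 1 ≤ k ∧ k ≤ n ∧
      (NSet w k).card < k * (k - 1) / 2 + (n - k) * (n - k + 1) / 2 := by
  have hiw : i - 1 < w.length := by omega
  have hjw : j - 1 < w.length := by omega
  have hchar : w[i-1] = w[j-1] := by
    rw [List.getElem?_eq_getElem hiw, List.getElem?_eq_getElem hjw] at heq
    exact Option.some_injective _ heq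
  obtain ⟨k, hk1, hkn, hki, hkj⟩ : ∃ k, 1 ≤ k ∧ k ≤ n ∧ k ≠ i ∧ k ≠ j := by
    by_cases h1 : 1 < i
    · exact ⟨1, by omega⟩
    · by_cases h2 : 2 < j
      · exact ⟨2, by omega⟩
      · exact ⟨3, by omega⟩
  refine ⟨k, hk1, hkn, ?_⟩
  set f : ℕ × ℕ → List α := fun q => (w.drop (q.1 - 1)).take (q.2 - q.1 + 1)
    with hf
  set s := ((Finset.Icc 1 w.length ×ˢ Finset.Icc 1 w.length).filter
    (fun q : ℕ × ℕ => q.1 ≤ q.2 ∧ (q.2 < k ∨ k < q.1))) with hs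
  have hmi : (i, i) ∈ s := by
    simp only [hs, Finset.mem_filter, Finset.mem_product, Finset.mem_Icc]
    omega
  have hmj : (j, j) ∈ s := by
    simp only [hs, Finset.mem_filter, Finset.mem_product, Finset.mem_Icc]
    omega
  have hfone : ∀ a, ∀ ha : a - 1 < w.length, f (a, a) = [w[a-1]'ha] := by
    intro a ha
    simp only [hf, Nat.sub_self, Nat.zero_add]
    rw [List.drop_eq_getElem_cons ha]
    rfl
  have hfij : f (i, i) = f (j, j) := by
    rw [hfone i hiw, hfone j hjw]
    simp [hchar]
  have hNS : NSet w k = s.image f := rfl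
  have key : s.image f ⊆ (s.erase (j, j)).image f := by
    intro x hx
    obtain ⟨q, hq, rfl⟩ := Finset.mem_image.mp hx
    by_cases hqj : q = (j, j)
    · subst hqj
      exact Finset.mem_image.mpr ⟨(i, i),
        Finset.mem_erase.mpr ⟨by simp [Prod.ext_iff]; omega, hmi⟩, hfij⟩
    · exact Finset.mem_image.mpr ⟨q, Finset.mem_erase.mpr ⟨hqj, hq⟩, rfl⟩
  have hcount : s.card ≤ k * (k - 1) / 2 + (n - k) * (n - k + 1) / 2 := by
    set T := fun m => (((Finset.Icc 1 m) ×ˢ (Finset.Icc 1 m)).filter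
      (fun q : ℕ × ℕ => q.1 ≤ q.2)) with hT
    have h1 : (s.filter (fun q => q.2 < k)) ⊆ T (k - 1) := by
      intro ⟨a, b⟩ hab
      simp only [hs, hT, Finset.mem_filter, Finset.mem_product,
        Finset.mem_Icc, hn] at hab ⊢
      omega
    have h2 : (s.filter (fun q => k < q.1)).card ≤ (T (n - k)).card := by
      apply Finset.card_le_card_of_injOn (fun q => (q.1 - k, q.2 - k))
      · intro ⟨a, b⟩ hab
        simp only [Finset.mem_coe, hs, hT, Finset.mem_filter, Finset.mem_product,
          Finset.mem_Icc, hn] at hab ⊢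
        omega
      · rintro ⟨a, b⟩ ha ⟨c, d⟩ hc hcd
        simp only [Finset.coe_filter, hs, Finset.mem_filter, Finset.mem_product,
          Finset.mem_Icc, Set.mem_setOf_eq] at ha hc
        simp only [Prod.mk.injEq] at hcd ⊢
        omega
    have hsub : s ⊆ (s.filter (fun q => q.2 < k)) ∪ (s.filter (fun q => k < q.1)) := by
      intro q hq
      have := hq
      simp only [hs, Finset.mem_filter] at this
      rcases this.2.2 with h | h
      · exact Finset.mem_union_left _ (Finset.mem_filter.mpr ⟨hq, h⟩)
      · exact Finset.mem_union_right _ (Finset.mem_filter.mpr ⟨hq, h⟩)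
    calc s.card ≤ ((s.filter (fun q => q.2 < k)) ∪ (s.filter (fun q => k < q.1))).card :=
          Finset.card_le_card hsub
      _ ≤ (s.filter (fun q => q.2 < k)).card + (s.filter (fun q => k < q.1)).card :=
          Finset.card_union_le _ _
      _ ≤ (T (k - 1)).card + (T (n - k)).card := by
          exact Nat.add_le_add (Finset.card_le_card h1) h2
      _ = k * (k - 1) / 2 + (n - k) * (n - k + 1) / 2 := by
          rw [hT]
          simp only [Tcard]
          congr 2
          rw [Nat.sub_add_cancel hk1, Nat.mul_comm]
  rw [hNS]
  calc (s.image f).card ≤ ((s.erase (j, j)).image f).card := Finset.card_le_card key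
    _ ≤ (s.erase (j, j)).card := Finset.card_image_le
    _ < s.card := Finset.card_erase_lt_of_mem hmj
    _ ≤ _ := hcount
end

section
/- Let x be a string over an alphabet not containing #, and define φ(x) = # x₁ # x₂ # ⋯ # x_n #. Then x is square-free if and only if no two equal substrings of φ(x) have occurrences crossing a common position; equivalently, C(φ(x),k) = k·(|φ(x)|-k+1) for every position k of φ(x). -/
open scoped Classical

/-- A string is square-free if it contains no factor `u ++ u` with `u` nonempty. -/
def SquareFree' {α : Type*} (x : List α) : Prop :=
  ¬ ∃ u : List α, u ≠ [] ∧ (u ++ u) <:+: x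

/-- `φ(x) = # x₁ # x₂ # ⋯ # x_n #`. -/
def phi {α : Type*} (x : List α) (hash : α) : List α :=
  hash :: x.flatMap (fun c => [c, hash])

namespace SqAux

variable {α : Type*}

lemma getElem_idx_eq (l : List α) {i j : ℕ} (h : i = j) (hi : i < l.length) :
    l[i] = l[j]'(h ▸ hi) := by subst h; rfl

lemma infix_pointwise {u w : List α} (h : u <:+: w) :
    ∃ a, a + u.length ≤ w.length ∧ ∀ s (hs : s < u.length) (hb : a + s < w.length),
      u[s] = w[a + s] := by
  obtain ⟨pre, suf, hw⟩ := h
  have hw' : w = pre ++ (u ++ suf) := by rw [← hw]; simp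
  subst hw'
  refine ⟨pre.length, by simp, ?_⟩
  intro s hs hb
  rw [List.getElem_append_right (Nat.le_add_right _ _)]
  rw [getElem_idx_eq _ (show pre.length + s - pre.length = s by omega)]
  rw [List.getElem_append_left hs]

lemma square_at (w : List α) (i p : ℕ) (hp : 0 < p) (hb : i + 2 * p ≤ w.length)
    (he : ∀ t, (ht : t < p) → w[i + t]'(by omega) = w[i + p + t]'(by omega)) :
    ∃ u : List α, u ≠ [] ∧ u ++ u <:+: w := by
  refine ⟨(w.drop i).take p, ?_, ?_⟩
  · have hl : ((w.drop i).take p).length = p := by simp; omega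
    intro h
    rw [h] at hl
    simp at hl
    omega
  · have key : (w.drop i).take p ++ (w.drop i).take p = (w.drop i).take (2 * p) := by
      apply List.ext_getElem
      · simp; omega
      · intro s h1 h2
        have hsl : s < 2 * p := by
          have h2' := h2
          simp at h2'
          omega
        rw [List.getElem_take, List.getElem_drop]
        rcases lt_or_ge s p with hs | hs
        · rw [List.getElem_append_left (by simp; omega), List.getElem_take,
            List.getElem_drop]
        · rw [List.getElem_append_right (by simp; omega)]
          have hlen : ((w.drop i).take p).length = p := by simp; omega
          have hs2 : s - ((w.drop i).take p).length < ((w.drop i).take p).length := by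
            rw [hlen]; omega
          rw [List.getElem_take, List.getElem_drop]
          have e1 := he (s - ((w.drop i).take p).length) (by rw [hlen] at hs2 ⊢; omega)
          rw [e1]
          exact getElem_idx_eq _ (by rw [hlen]; omega) _
    rw [key]
    exact ⟨w.take i, w.drop (i + 2 * p), by rw [← List.take_add]; simp⟩

lemma phi_length (x : List α) (hash : α) : (phi x hash).length = 2 * x.length + 1 := by
  induction x with
  | nil => rfl
  | cons c x ih =>
    show (hash :: c :: phi x hash).length = _
    simp only [List.length_cons, ih, List.length_cons]
    omega

lemma phi_get_even (x : List α) (hash : α) (t : ℕ)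
    (ht : 2 * t < (phi x hash).length) : (phi x hash)[2 * t] = hash := by
  induction x generalizing t with
  | nil =>
    have : t = 0 := by simp [phi] at ht; omega
    subst this; rfl
  | cons c x ih =>
    cases t with
    | zero => rfl
    | succ t' =>
      rw [getElem_idx_eq _ (show 2 * (t' + 1) = 2 * t' + 1 + 1 by omega)]
      have hphi : phi (c :: x) hash = hash :: c :: phi x hash := rfl
      simp only [hphi, List.getElem_cons_succ]
      exact ih t' (by rw [phi_length] at ht ⊢; simp at ht; omega)

lemma phi_get_odd (x : List α) (hash : α) (t : ℕ) (ht : t < x.length) :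
    (phi x hash)[2 * t + 1]'(by rw [phi_length]; omega) = x[t] := by
  induction x generalizing t with
  | nil => simp at ht
  | cons c x ih =>
    cases t with
    | zero => rfl
    | succ t' =>
      rw [getElem_idx_eq _ (show 2 * (t' + 1) + 1 = 2 * t' + 1 + 1 + 1 by omega)]
      have hphi : phi (c :: x) hash = hash :: c :: phi x hash := rfl
      simp only [hphi, List.getElem_cons_succ]
      exact ih t' (by simpa using ht)

lemma phi_mem_odd (x : List α) (hash : α) (q : ℕ) (hq : q < (phi x hash).length)
    (ho : q % 2 = 1) : (phi x hash)[q] ∈ x := by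
  have hL := phi_length x hash
  rw [getElem_idx_eq _ (show q = 2 * ((q - 1) / 2) + 1 by omega),
    phi_get_odd x hash _ (by omega)]
  exact List.getElem_mem _

lemma phi_eq_even (x : List α) (hash : α) (q : ℕ) (hq : q < (phi x hash).length)
    (ho : q % 2 = 0) : (phi x hash)[q] = hash := by
  rw [getElem_idx_eq _ (show q = 2 * (q / 2) by omega), phi_get_even x hash _ (by omega)]

/-- A square in `phi x hash` yields a square in `x`. -/
lemma phi_square_to_x {x : List α} {hash : α} (hh : hash ∉ x)
    {u : List α} (hu : u ≠ []) (hinf : u ++ u <:+: phi x hash) :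
    ∃ v : List α, v ≠ [] ∧ v ++ v <:+: x := by
  obtain ⟨a, hlen, hpt⟩ := infix_pointwise hinf
  have hul : 0 < u.length := List.length_pos_iff.2 hu
  have hwlen : (phi x hash).length = 2 * x.length + 1 := phi_length x hash
  have hlen' : a + 2 * u.length ≤ (phi x hash).length := by simp at hlen; omega
  have key : ∀ s, (hs : s < u.length) → (phi x hash)[a + s]'(by omega)
      = (phi x hash)[a + u.length + s]'(by omega) := by
    intro s hs
    have h1 := hpt s (by simp; omega) (by omega)
    have h2 := hpt (u.length + s) (by simp; omega) (by omega)
    rw [List.getElem_append_left hs] at h1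
    rw [List.getElem_append_right (by omega)] at h2
    rw [getElem_idx_eq _ (show u.length + s - u.length = s by omega)] at h2
    rw [← h1, h2]
    exact getElem_idx_eq _ (by omega) _
  rcases Nat.even_or_odd u.length with he | ho
  · -- u.length = 2 * p
    obtain ⟨p, hp2⟩ : ∃ p, u.length = 2 * p := by
      rcases he with ⟨p, hp⟩; exact ⟨p, by omega⟩
    have hp : 0 < p := by omega
    set t0 := a / 2 with ht0
    have ht01 : a ≤ 2 * t0 + 1 ∧ 2 * t0 ≤ a := by omega
    have hbound : t0 + 2 * p ≤ x.length := by omega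
    have hx : ∀ s, (hs : s < p) → x[t0 + s]'(by omega) = x[t0 + p + s]'(by omega) := by
      intro s hs
      have e1 := phi_get_odd x hash (t0 + s) (by omega)
      have e2 := phi_get_odd x hash (t0 + p + s) (by omega)
      rw [← e1, ← e2]
      have e3 := key (2 * (t0 + s) + 1 - a) (by omega)
      rw [getElem_idx_eq _ (show a + (2 * (t0 + s) + 1 - a) = 2 * (t0 + s) + 1 by omega),
        getElem_idx_eq _
          (show a + u.length + (2 * (t0 + s) + 1 - a) = 2 * (t0 + p + s) + 1 by omega)]
        at e3
      exact e3
    exact square_at x t0 p hp (by omega) hx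
  · -- u.length odd : contradiction via parity
    exfalso
    have h0 := key 0 hul
    rw [getElem_idx_eq _ (show a + 0 = a by omega)] at h0
    rw [getElem_idx_eq _ (show a + u.length + 0 = a + u.length by omega)] at h0
    obtain ⟨m, hm⟩ := ho
    rcases Nat.even_or_odd a with ⟨r, hr⟩ | ⟨r, hr⟩
    · have hev := phi_eq_even x hash a (by omega) (by omega)
      have hod := phi_mem_odd x hash (a + u.length) (by omega) (by omega)
      rw [← h0, hev] at hod
      exact hh hod
    · have hod := phi_mem_odd x hash a (by omega) (by omega)
      have hev := phi_eq_even x hash (a + u.length) (by omega) (by omega)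
      rw [h0, hev] at hod
      exact hh hod

/-- Overlapping equal factors of `phi x hash` contradict square-freeness of `x`. -/
lemma no_overlap {x : List α} {hash : α} (hh : hash ∉ x) (hsf : SquareFree' x)
    {i j i' j' : ℕ} (h1 : 1 ≤ i) (hii' : i < i') (hjN : j' ≤ (phi x hash).length)
    (hij : i' ≤ j) (hd : j - i = j' - i')
    (heq : ((phi x hash).drop (i - 1)).take (j - i + 1)
      = ((phi x hash).drop (i' - 1)).take (j' - i' + 1)) : False := by
  set w := phi x hash with hwdef
  set p := i' - i with hpdef
  have hp : 0 < p := by omega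
  have hjj' : j' = j + p := by omega
  have hb : (i - 1) + 2 * p ≤ w.length := by omega
  have hpt : ∀ s, (hs : s < p) → w[(i - 1) + s]'(by omega)
      = w[(i - 1) + p + s]'(by omega) := by
    intro s hs
    have hsl : s < ((w.drop (i - 1)).take (j - i + 1)).length := by
      simp; omega
    have h1' : ((w.drop (i - 1)).take (j - i + 1))[s]'hsl = w[(i - 1) + s]'(by omega) := by
      rw [List.getElem_take, List.getElem_drop]
    have hsl2 : s < ((w.drop (i' - 1)).take (j' - i' + 1)).length := by
      simp; omega
    have h2' : ((w.drop (i' - 1)).take (j' - i' + 1))[s]'hsl2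
        = w[(i' - 1) + s]'(by omega) := by
      rw [List.getElem_take, List.getElem_drop]
    have h3 := List.getElem_of_eq heq hsl
    exact h1'.symm.trans (h3.trans (h2'.trans (getElem_idx_eq _ (by omega) _)))
  obtain ⟨u, hu, huinf⟩ := square_at w (i - 1) p hp hb hpt
  exact hsf (phi_square_to_x hh hu huinf)

lemma flatMap_length (l : List α) (hash : α) :
    (l.flatMap (fun c => [c, hash])).length = 2 * l.length := by
  induction l with
  | nil => rfl
  | cons c l ih => simp [ih]; omega

lemma cons_flatMap_concat (hash : α) (a : List α) :
    ∃ s', hash :: a.flatMap (fun c => [c, hash]) = s' ++ [hash] := by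
  induction a using List.reverseRecOn with
  | nil => exact ⟨[], rfl⟩
  | append_singleton a c _ =>
    exact ⟨hash :: a.flatMap (fun c => [c, hash]) ++ [c], by
      simp [List.flatMap_append]⟩

end SqAux

open SqAux in
/-- `x` is square-free iff `C(φ(x), k) = k (|φ(x)| - k + 1)` for every
position `k` of `φ(x)`, i.e. no two equal substrings of `φ(x)` have occurrences
crossing a common position. -/
theorem squarefree_iff_C_eq_total {α : Type*} (x : List α) (hash : α)
    (hh : hash ∉ x) :
    SquareFree' x ↔
      ∀ k, 1 ≤ k → k ≤ (phi x hash).length →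
        (CSet (phi x hash) k).card = k * ((phi x hash).length - k + 1) := by
  set w := phi x hash with hwdef
  constructor
  · intro hsf k hk1 hk2
    rw [CSet]
    have hinj : Set.InjOn (fun q : ℕ × ℕ => (w.drop (q.1 - 1)).take (q.2 - q.1 + 1))
        ↑((Finset.Icc 1 k) ×ˢ (Finset.Icc k w.length)) := by
      rintro ⟨i, j⟩ hq ⟨i', j'⟩ hq' heq
      simp only [Finset.coe_product, Set.mem_prod, Finset.mem_coe, Finset.mem_Icc] at hq hq'
      obtain ⟨⟨hi1, hik⟩, hkj, hjN⟩ := hq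
      obtain ⟨⟨hi1', hik'⟩, hkj', hjN'⟩ := hq'
      simp only at heq
      have hl := congrArg List.length heq
      simp only [List.length_take, List.length_drop] at hl
      have hd : j - i = j' - i' := by omega
      rcases lt_trichotomy i i' with h | h | h
      · exact absurd (no_overlap hh hsf hi1 h hjN' (by omega) hd heq) (by simp)
      · have : j = j' := by omega
        subst h; subst this; rfl
      · exact absurd (no_overlap hh hsf hi1' h hjN (by omega) hd.symm heq.symm) (by simp)
    rw [Finset.card_image_of_injOn hinj, Finset.card_product, Nat.card_Icc, Nat.card_Icc]
    have e1 : k + 1 - 1 = k := by omega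
    have e2 : w.length + 1 - k = w.length - k + 1 := by omega
    rw [e1, e2]
  · intro hC
    rintro ⟨u, hu, hinf⟩
    obtain ⟨a, b, hab⟩ := hinf
    obtain ⟨u₀, c, huc⟩ := (List.eq_nil_or_concat u).resolve_left hu
    have hgulen : (u.flatMap (fun c => [c, hash])).length = 2 * u.length :=
      flatMap_length u hash
    set gu := u.flatMap (fun c => [c, hash]) with hgu
    set L := gu.length with hL
    have hL2 : 2 ≤ L := by
      have : 1 ≤ u.length := List.length_pos_iff.2 hu
      omega
    obtain ⟨s', hs'⟩ := cons_flatMap_concat hash a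
    -- m : gu without its last hash
    have hm : ∃ m : List α, gu = m ++ [hash] ∧ m.length = L - 1 := by
      refine ⟨u₀.flatMap (fun c => [c, hash]) ++ [c], ?_, ?_⟩
      · rw [hgu, huc]
        simp [List.flatMap_append, List.concat_eq_append]
      · have h1 := flatMap_length u₀ hash
        have h2 : u.length = u₀.length + 1 := by rw [huc]; simp
        simp [h1]
        omega
    obtain ⟨m, hmeq, hmlen⟩ := hm
    set V := hash :: gu with hV
    have hVlen : V.length = L + 1 := by simp [hV, hL]
    have hxw : w = s' ++ (V ++ (gu ++ b.flatMap (fun c => [c, hash]))) := by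
      rw [hwdef, ← hab]
      show hash :: (a ++ (u ++ u) ++ b).flatMap (fun c => [c, hash]) = _
      simp only [List.flatMap_append]
      rw [show hash :: ((a.flatMap fun c => [c, hash]) ++
          ((u.flatMap fun c => [c, hash]) ++ (u.flatMap fun c => [c, hash])) ++
          (b.flatMap fun c => [c, hash]))
        = (hash :: a.flatMap fun c => [c, hash]) ++
          (((u.flatMap fun c => [c, hash]) ++ (u.flatMap fun c => [c, hash])) ++
          (b.flatMap fun c => [c, hash])) from by simp, hs']
      rw [← hgu, hV]
      simp
    have hxw2 : w = (s' ++ [hash] ++ m) ++ (V ++ b.flatMap (fun c => [c, hash])) := by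
      rw [hxw, hV, hmeq]
      simp
    have hN : s'.length + 2 * L + 1 ≤ w.length := by
      rw [hxw]
      simp [hVlen]
      omega
    set k := s'.length + L + 1 with hk
    have hkN : k ≤ w.length := by omega
    -- the two pairs
    have hval1 : (w.drop ((s'.length + 1) - 1)).take
        ((s'.length + L + 1) - (s'.length + 1) + 1) = V := by
      rw [show (s'.length + 1) - 1 = s'.length by omega,
        show (s'.length + L + 1) - (s'.length + 1) + 1 = L + 1 by omega,
        hxw, List.drop_left' rfl, List.take_left' hVlen]
    have hval2 : (w.drop ((s'.length + L + 1) - 1)).take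
        ((s'.length + 2 * L + 1) - (s'.length + L + 1) + 1) = V := by
      rw [show (s'.length + L + 1) - 1 = s'.length + L by omega,
        show (s'.length + 2 * L + 1) - (s'.length + L + 1) + 1 = L + 1 by omega,
        hxw2, List.drop_left' (by simp [hmlen]; omega), List.take_left' hVlen]
    have hcard := hC k (by omega) hkN
    rw [CSet] at hcard
    have hinj : Set.InjOn (fun q : ℕ × ℕ => (w.drop (q.1 - 1)).take (q.2 - q.1 + 1))
        ↑((Finset.Icc 1 k) ×ˢ (Finset.Icc k w.length)) := by
      apply Finset.injOn_of_card_image_eq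
      rw [hcard, Finset.card_product, Nat.card_Icc, Nat.card_Icc]
      rw [show k + 1 - 1 = k by omega,
        show w.length + 1 - k = w.length - k + 1 by omega]
    have hmem1 : ((s'.length + 1, s'.length + L + 1) : ℕ × ℕ)
        ∈ (((Finset.Icc 1 k) ×ˢ (Finset.Icc k w.length) : Finset (ℕ × ℕ)) :
          Set (ℕ × ℕ)) := by
      simp only [Finset.coe_product, Set.mem_prod, Finset.mem_coe, Finset.mem_Icc]
      omega
    have hmem2 : ((s'.length + L + 1, s'.length + 2 * L + 1) : ℕ × ℕ)
        ∈ (((Finset.Icc 1 k) ×ˢ (Finset.Icc k w.length) : Finset (ℕ × ℕ)) :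
          Set (ℕ × ℕ)) := by
      simp only [Finset.coe_product, Set.mem_prod, Finset.mem_coe, Finset.mem_Icc]
      omega
    have hq := hinj hmem1 hmem2 (by simp only; rw [hval1, hval2])
    have h1 := congrArg Prod.fst hq
    simp at h1
    omega
end

section
/- Fix a period p and an interval I. Every I-local maximal p-periodic crossing interval of length at least 2p is uniquely determined by a maximal p-good block of length at least p intersecting the window W_p = [m-p+1, m]; consequently, for each fixed p there are at most 2 such candidates. -/
/-!
Order the candidates by their left end `i`. If `i < i'`, left-maximality of `[i', j']` forbids
`[i', j']` from ending inside `[i, j]`, so `j < j'`; right-maximality of `[i, j]` then forbids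
`[i', j']` from covering `[j + 1 - p, j + 1]`, so `j + 2 ≤ i' + p`. Candidates with the same left
end coincide. Along a chain of three candidates these gaps push the third left end past `m`,
contradicting the crossing condition.
-/

theorem Finset.card_le_two_of_forall_not_lt_lt {α : Type*} [LinearOrder α] {s : Finset α}
    (h : ∀ x ∈ s, ∀ y ∈ s, ∀ z ∈ s, x < y → y < z → False) : s.card ≤ 2 := by
  by_contra! hs
  let f := s.orderEmbOfFin rfl
  exact h (f ⟨0, by omega⟩) (s.orderEmbOfFin_mem rfl _) (f ⟨1, by omega⟩)
    (s.orderEmbOfFin_mem rfl _) (f ⟨2, by omega⟩) (s.orderEmbOfFin_mem rfl _)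
    (f.strictMono (by simp)) (f.strictMono (by simp))

section Periodicity

variable {α : Type*} (w : ℕ → α)

def IsPeriodicOn (p i j : ℕ) : Prop :=
  ∀ t, i ≤ t → t + p ≤ j → w t = w (t + p)

def IsLeftMaximal (b p i : ℕ) : Prop :=
  i = b ∨ w (i - 1) ≠ w (i - 1 + p)

def IsRightMaximal (e p j : ℕ) : Prop :=
  j = e ∨ w (j + 1 - p) ≠ w (j + 1)

variable {w}

theorem IsPeriodicOn.not_isLeftMaximal {b p i j i' : ℕ} (hper : IsPeriodicOn w p i j)
    (hb : b ≤ i) (hi : i < i') (hj : i' + p ≤ j + 1) : ¬ IsLeftMaximal w b p i' := by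
  rintro (rfl | hne)
  · omega
  · exact hne (hper (i' - 1) (by omega) (by omega))

theorem IsPeriodicOn.not_isRightMaximal {e p i j j' : ℕ} (hper : IsPeriodicOn w p i j)
    (he : j ≤ e) (hi : i + p ≤ j' + 1) (hj : j' < j) : ¬ IsRightMaximal w e p j' := by
  rintro (rfl | hne)
  · omega
  · have := hper (j' + 1 - p) (by omega) (by omega)
    rw [Nat.sub_add_cancel (by omega)] at this
    exact hne this

end Periodicity

structure IsLocalMaxCrossing {α : Type*} (w : ℕ → α) (b e m p i j : ℕ) : Prop where
  le_left : b ≤ i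
  right_le : j ≤ e
  left_le_split : i ≤ m
  split_lt_right : m < j
  two_mul_period_le : 2 * p ≤ j - i + 1
  periodicOn : IsPeriodicOn w p i j
  isLeftMaximal : IsLeftMaximal w b p i
  isRightMaximal : IsRightMaximal w e p j

namespace IsLocalMaxCrossing

variable {α : Type*} {w : ℕ → α} {b e m p i j i' j' : ℕ}

theorem add_two_mul_period_le (h : IsLocalMaxCrossing w b e m p i j) : i + 2 * p ≤ j + 1 := by
  have := h.two_mul_period_le
  have := h.left_le_split
  have := h.split_lt_right
  omega

theorem right_le_right (h : IsLocalMaxCrossing w b e m p i j)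
    (h' : IsLocalMaxCrossing w b e m p i' j') (hi : i ≤ i') : j ≤ j' := by
  by_contra! hj
  exact h.periodicOn.not_isRightMaximal h.right_le
    (by have := h'.add_two_mul_period_le; omega) hj h'.isRightMaximal

theorem right_eq (h : IsLocalMaxCrossing w b e m p i j)
    (h' : IsLocalMaxCrossing w b e m p i j') : j = j' :=
  le_antisymm (h.right_le_right h' le_rfl) (h'.right_le_right h le_rfl)

theorem right_lt_right (h : IsLocalMaxCrossing w b e m p i j)
    (h' : IsLocalMaxCrossing w b e m p i' j') (hi : i < i') : j < j' := by
  by_contra! hj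
  exact h.periodicOn.not_isLeftMaximal h.le_left hi
    (by have := h'.add_two_mul_period_le; omega) h'.isLeftMaximal

theorem right_add_two_le (h : IsLocalMaxCrossing w b e m p i j)
    (h' : IsLocalMaxCrossing w b e m p i' j') (hi : i < i') : j + 2 ≤ i' + p := by
  by_contra! hj
  exact h'.periodicOn.not_isRightMaximal h'.right_le (by omega) (h.right_lt_right h' hi)
    h.isRightMaximal

theorem not_chain_three {i'' j'' : ℕ} (h : IsLocalMaxCrossing w b e m p i j)
    (h' : IsLocalMaxCrossing w b e m p i' j') (h'' : IsLocalMaxCrossing w b e m p i'' j'')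
    (hi : i < i') (hi' : i' < i'') : False := by
  have := h.right_add_two_le h' hi
  have := h'.right_add_two_le h'' hi'
  have := h.split_lt_right
  have := h'.add_two_mul_period_le
  have := h''.left_le_split
  omega

theorem card_le_two {S : Finset (ℕ × ℕ)}
    (hS : ∀ q ∈ S, IsLocalMaxCrossing w b e m p q.1 q.2) : S.card ≤ 2 := by
  have hinj : Set.InjOn Prod.fst S := fun q hq r hr h =>
    Prod.ext h ((hS q hq).right_eq (h ▸ hS r hr))
  rw [← Finset.card_image_of_injOn hinj]
  refine Finset.card_le_two_of_forall_not_lt_lt fun x hx y hy z hz hxy hyz => ?_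
  obtain ⟨q, hq, rfl⟩ := Finset.mem_image.1 hx
  obtain ⟨r, hr, rfl⟩ := Finset.mem_image.1 hy
  obtain ⟨s, hs, rfl⟩ := Finset.mem_image.1 hz
  exact (hS q hq).not_chain_three (hS r hr) (hS s hs) hxy hyz

end IsLocalMaxCrossing

open scoped Classical

theorem local_crossing_candidates_at_most_two_general {α : Type*} (w : ℕ → α)
    (b e m p : ℕ) :
    (((Finset.Icc b e) ×ˢ (Finset.Icc b e)).filter
      (fun q : ℕ × ℕ =>
        q.1 ≤ m ∧ m < q.2 ∧ 2 * p ≤ q.2 - q.1 + 1 ∧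
        (∀ t, q.1 ≤ t → t + p ≤ q.2 → w t = w (t + p)) ∧
        (q.1 = b ∨ w (q.1 - 1) ≠ w (q.1 - 1 + p)) ∧
        (q.2 = e ∨ w (q.2 + 1 - p) ≠ w (q.2 + 1)))).card ≤ 2 := by
  refine IsLocalMaxCrossing.card_le_two (w := w) (b := b) (e := e) (m := m) (p := p) fun q hq => ?_
  simp only [Finset.mem_filter, Finset.mem_product, Finset.mem_Icc] at hq
  obtain ⟨⟨⟨hbi, -⟩, -, hje⟩, him, hmj, hlen, hper, hleft, hright⟩ := hq
  exact ⟨hbi, hje, him, hmj, hlen, hper, hleft, hright⟩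

/-- For `I = [b,e]` with split point `m = ⌊(b+e)/2⌋` and a fixed period `p`,
there are at most two `I`-local maximal `p`-periodic crossing intervals of
length at least `2p` (each is determined by a maximal `p`-good block of length
at least `p` intersecting the window `W_p = [m-p+1, m]`). -/
theorem local_crossing_candidates_at_most_two {α : Type*} (w : ℕ → α)
    (b e m p : ℕ) (hm : m = (b + e) / 2) (hp : 1 ≤ p) (hpI : 2 * p ≤ e - b + 1) :
    (((Finset.Icc b e) ×ˢ (Finset.Icc b e)).filter
      (fun q : ℕ × ℕ =>
        q.1 ≤ m ∧ m < q.2 ∧ 2 * p ≤ q.2 - q.1 + 1 ∧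
        (∀ t, q.1 ≤ t → t + p ≤ q.2 → w t = w (t + p)) ∧
        (q.1 = b ∨ w (q.1 - 1) ≠ w (q.1 - 1 + p)) ∧
        (q.2 = e ∨ w (q.2 + 1 - p) ≠ w (q.2 + 1)))).card ≤ 2 :=
  local_crossing_candidates_at_most_two_general w b e m p
end

section
/- Any deterministic algorithm that decides pairwise distinctness of n symbols using only equality tests between symbols must perform at least C(n,2) equality tests in the worst case: for any decision tree of depth less than C(n,2) on the all-distinct input, there exist two inputs (one all-distinct, one with exactly one equal pair) producing the same transcript. -/
/-- A deterministic decision tree on `n` symbols whose internal nodes query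
equality of two of the symbols. -/
inductive DTree (n : ℕ) : Type where
  | leaf : Bool → DTree n
  | node : Fin n → Fin n → DTree n → DTree n → DTree n

/-- The transcript of running a decision tree on an input: the sequence of
queried pairs together with the answers to the equality tests. -/
def transcript {n : ℕ} : DTree n → (Fin n → ℕ) → List ((Fin n × Fin n) × Bool)
  | .leaf _, _ => []
  | .node i j t f, v =>
      if v i = v j then ((i, j), true) :: transcript t v
      else ((i, j), false) :: transcript f v

/-- Element-distinctness lower bound in the equality-testing model: if a
decision tree performs fewer than `C(n,2)` equality tests on an all-distinct
input `v`, then there is an input `v'` with exactly one equal pair of symbols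
(all other symbols pairwise distinct) producing the same transcript. -/
theorem element_distinctness_lower_bound (n : ℕ) (T : DTree n) (v : Fin n → ℕ)
    (hv : Function.Injective v)
    (hshort : (transcript T v).length < n.choose 2) :
    ∃ v' : Fin n → ℕ,
      (∃ i j : Fin n, i ≠ j ∧ v' i = v' j ∧
        ∀ a b : Fin n, a ≠ b → v' a = v' b → (a = i ∧ b = j) ∨ (a = j ∧ b = i)) ∧
      transcript T v' = transcript T v := by
  -- find an unordered pair {i,j} not queried along the path of `v`
  set L : Finset (Finset (Fin n)) :=
    ((transcript T v).map (fun p => ({p.1.1, p.1.2} : Finset (Fin n)))).toFinset with hL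
  have hLcard : L.card < ((Finset.univ : Finset (Fin n)).powersetCard 2).card := by
    rw [Finset.card_powersetCard, Finset.card_univ, Fintype.card_fin]
    calc L.card ≤ ((transcript T v).map
        (fun p => ({p.1.1, p.1.2} : Finset (Fin n)))).length := List.toFinset_card_le _
      _ = (transcript T v).length := List.length_map _
      _ < n.choose 2 := hshort
  have hsub : ¬ ((Finset.univ : Finset (Fin n)).powersetCard 2 ⊆ L) := fun h =>
    absurd (Finset.card_le_card h) (by omega)
  obtain ⟨s, hs, hsL⟩ := Finset.not_subset.mp hsub
  have hs2 : s.card = 2 := (Finset.mem_powersetCard.mp hs).2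
  obtain ⟨i, j, hij, rfl⟩ := Finset.card_eq_two.mp hs2
  have hnot : ∀ p ∈ transcript T v, ({p.1.1, p.1.2} : Finset (Fin n)) ≠ {i, j} := by
    intro p hp heq
    exact hsL (by rw [hL, List.mem_toFinset]; exact heq ▸ List.mem_map_of_mem hp)
  refine ⟨fun k => if k = j then v i else v k, ⟨i, j, hij, ?_, ?_⟩, ?_⟩
  · simp [hij]
  · intro a b hab h
    simp only at h
    by_cases ha : a = j
    · by_cases hb : b = j
      · exact absurd (ha.trans hb.symm) hab
      · rw [if_pos ha, if_neg hb] at h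
        exact Or.inr ⟨ha, (hv h).symm⟩
    · by_cases hb : b = j
      · rw [if_neg ha, if_pos hb] at h
        exact Or.inl ⟨hv h, hb⟩
      · rw [if_neg ha, if_neg hb] at h
        exact absurd (hv h) hab
  · -- transcript equality, by induction on T
    clear hshort hsL hs hs2 hLcard hsub
    clear_value L
    clear hL L
    induction T with
    | leaf b => simp [transcript]
    | node a b t f iht ihf =>
      have hab : ({a, b} : Finset (Fin n)) ≠ {i, j} := by
        refine hnot ((a, b), if v a = v b then true else false) ?_
        simp only [transcript]
        split <;> simp_all
      have hiff : (if a = j then v i else v a) = (if b = j then v i else v b) ↔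
          v a = v b := by
        constructor
        · intro h
          by_cases ha : a = j
          · by_cases hb : b = j
            · rw [ha, hb]
            · rw [if_pos ha, if_neg hb] at h
              exact absurd (by rw [ha, ← hv h, Finset.pair_comm]) hab
          · by_cases hb : b = j
            · rw [if_neg ha, if_pos hb] at h
              exact absurd (by rw [hb, hv h]) hab
            · rwa [if_neg ha, if_neg hb] at h
        · intro h; rw [hv h]
      simp only [transcript] at hnot ⊢
      by_cases h : v a = v b
      · rw [if_pos h, if_pos (hiff.mpr h)]
        simp only [if_pos h] at hnot
        exact congrArg _ (iht fun p hp => hnot p (List.mem_cons_of_mem _ hp))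
      · rw [if_neg h, if_neg (fun hc => h (hiff.mp hc))]
        simp only [if_neg h] at hnot
        exact congrArg _ (ihf fun p hp => hnot p (List.mem_cons_of_mem _ hp))
end
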